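/- arXiv:1905.10443 — 8 statements merged into one kernel-verified Lean document; each statement's English description precedes it below -/
import Mathlib

section
/- If m < (1/2)(1/μ + 1), where μ is the coherence of a unit-norm dictionary Φ, then μ₁(m) + μ₁(m−1) < 1, where μ₁ is the Babel function of Φ. -/
open Matrix BigOperators Finset Filter

/-- The Euclidean (ℓ²) norm of a finite vector. -/
noncomputable def l2norm {k : ℕ} (v : Fin k → ℝ) : ℝ := Real.sqrt (∑ i, v i ^ 2)

/-- The ℓ¹ norm of a finite vector. -/
def l1norm {k : ℕ} (v : Fin k → ℝ) : ℝ := ∑ i, |v i|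

/-- The coherence of a dictionary: the largest absolute inner product between two
distinct atoms (columns). -/
noncomputable def coh {d n : ℕ} (Φ : Matrix (Fin d) (Fin n) ℝ) : ℝ :=
  sSup {x | ∃ j k : Fin n, j ≠ k ∧ x = |(fun i => Φ i j) ⬝ᵥ (fun i => Φ i k)|}

/-- The Babel function of a dictionary: μ₁(m) = max_{|Λ|=m} max_{i∉Λ} ∑_{j∈Λ} |⟨φᵢ,φⱼ⟩|. -/
noncomputable def babel {d n : ℕ} (Φ : Matrix (Fin d) (Fin n) ℝ) (m : ℕ) : ℝ :=
  sSup {x | ∃ (Λ : Finset (Fin n)) (i : Fin n), Λ.card = m ∧ i ∉ Λ ∧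
    x = ∑ j ∈ Λ, |(fun a => Φ a i) ⬝ᵥ (fun a => Φ a j)|}

lemma dot_le_one {d n : ℕ} (Φ : Matrix (Fin d) (Fin n) ℝ)
    (hunit : ∀ j, l2norm (fun i => Φ i j) = 1) (j k : Fin n) :
    |(fun i => Φ i j) ⬝ᵥ (fun i => Φ i k)| ≤ 1 := by
  have h := Real.sum_mul_le_sqrt_mul_sqrt (Finset.univ : Finset (Fin d))
    (fun i => |Φ i j|) (fun i => |Φ i k|)
  simp only [sq_abs] at h
  calc |(fun i => Φ i j) ⬝ᵥ (fun i => Φ i k)| ≤ ∑ i, |Φ i j * Φ i k| := by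
        simpa [dotProduct] using Finset.abs_sum_le_sum_abs
          (fun i => Φ i j * Φ i k) Finset.univ
    _ = ∑ i, |Φ i j| * |Φ i k| := by simp [abs_mul]
    _ ≤ Real.sqrt (∑ i, Φ i j ^ 2) * Real.sqrt (∑ i, Φ i k ^ 2) := h
    _ = 1 := by
        have hj := hunit j; have hk := hunit k
        simp only [l2norm] at hj hk
        rw [hj, hk]; norm_num

lemma dot_le_coh {d n : ℕ} (Φ : Matrix (Fin d) (Fin n) ℝ)
    (hunit : ∀ j, l2norm (fun i => Φ i j) = 1) {j k : Fin n} (hjk : j ≠ k) :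
    |(fun i => Φ i j) ⬝ᵥ (fun i => Φ i k)| ≤ coh Φ := by
  apply le_csSup
  · exact ⟨1, fun x ⟨a, b, hab, hx⟩ => hx ▸ dot_le_one Φ hunit a b⟩
  · exact ⟨j, k, hjk, rfl⟩

lemma babel_le {d n : ℕ} (Φ : Matrix (Fin d) (Fin n) ℝ)
    (hunit : ∀ j, l2norm (fun i => Φ i j) = 1) (hμpos : 0 < coh Φ) (m : ℕ) :
    babel Φ m ≤ m * coh Φ := by
  apply Real.sSup_le
  · rintro x ⟨Λ, i, hcard, hi, rfl⟩
    calc ∑ j ∈ Λ, |(fun a => Φ a i) ⬝ᵥ (fun a => Φ a j)| ≤ ∑ j ∈ Λ, coh Φ := by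
          apply Finset.sum_le_sum
          intro j hj
          exact dot_le_coh Φ hunit (fun h => hi (h ▸ hj))
      _ = m * coh Φ := by rw [Finset.sum_const, hcard, nsmul_eq_mul]
  · positivity

/-- If m < (1/2)(1/μ + 1) then μ₁(m) + μ₁(m−1) < 1. -/
theorem stmt3 {d n : ℕ} (Φ : Matrix (Fin d) (Fin n) ℝ)
    (hunit : ∀ j, l2norm (fun i => Φ i j) = 1)
    (hμpos : 0 < coh Φ) (m : ℕ) (hm1 : 1 ≤ m)
    (hm : (m : ℝ) < (1/2) * (1 / coh Φ + 1)) :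
    babel Φ m + babel Φ (m - 1) < 1 := by
  have h1 := babel_le Φ hunit hμpos m
  have h2 := babel_le Φ hunit hμpos (m - 1)
  have hcast : ((m - 1 : ℕ) : ℝ) = (m : ℝ) - 1 := by
    have : (1 : ℕ) ≤ m := hm1
    push_cast [this]; ring
  rw [hcast] at h2
  have hμ : coh Φ > 0 := hμpos
  have key : ((m : ℝ) + ((m : ℝ) - 1)) * coh Φ < 1 := by
    have h := (mul_lt_mul_iff_of_pos_right hμ).mpr hm
    rw [mul_assoc, add_mul, div_mul_cancel₀ _ (ne_of_gt hμ)] at h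
    nlinarith
  nlinarith
end

section
/- If μ₁(m) + μ₁(m−1) < 1 then any m atoms of the dictionary Φ are linearly independent. -/
open Matrix BigOperators Finset Filter

lemma babelSet_finite {d n : ℕ} (Φ : Matrix (Fin d) (Fin n) ℝ) (m : ℕ) :
    Set.Finite {x | ∃ (Λ : Finset (Fin n)) (i : Fin n), Λ.card = m ∧ i ∉ Λ ∧
      x = ∑ j ∈ Λ, |(fun a => Φ a i) ⬝ᵥ (fun a => Φ a j)|} := by
  apply Set.Finite.subset (Set.finite_range (fun p : Finset (Fin n) × Fin n =>
    ∑ j ∈ p.1, |(fun a => Φ a p.2) ⬝ᵥ (fun a => Φ a j)|))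
  rintro x ⟨Λ, i, _, _, rfl⟩
  exact ⟨(Λ, i), rfl⟩

lemma sum_le_babel {d n : ℕ} (Φ : Matrix (Fin d) (Fin n) ℝ) (m : ℕ)
    (Λ : Finset (Fin n)) (i : Fin n) (h1 : Λ.card = m) (h2 : i ∉ Λ) :
    ∑ j ∈ Λ, |(fun a => Φ a i) ⬝ᵥ (fun a => Φ a j)| ≤ babel Φ m :=
  le_csSup (babelSet_finite Φ m).bddAbove ⟨Λ, i, h1, h2, rfl⟩

lemma babel_nonneg {d n : ℕ} (Φ : Matrix (Fin d) (Fin n) ℝ) (m : ℕ) :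
    0 ≤ babel Φ m := by
  rcases Set.eq_empty_or_nonempty {x | ∃ (Λ : Finset (Fin n)) (i : Fin n), Λ.card = m ∧ i ∉ Λ ∧
      x = ∑ j ∈ Λ, |(fun a => Φ a i) ⬝ᵥ (fun a => Φ a j)|} with he | ⟨x, Λ, i, h1, h2, rfl⟩
  · rw [babel, he, Real.sSup_empty]
  · exact le_trans (Finset.sum_nonneg fun _ _ => abs_nonneg _)
      (sum_le_babel Φ m Λ i h1 h2)

/-- If μ₁(m) + μ₁(m−1) < 1, any m atoms of Φ are linearly independent. -/
theorem stmt5 {d n : ℕ} (Φ : Matrix (Fin d) (Fin n) ℝ)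
    (hunit : ∀ j, l2norm (fun i => Φ i j) = 1)
    (m : ℕ) (hm1 : 1 ≤ m) (h : babel Φ m + babel Φ (m - 1) < 1)
    (Λ : Finset (Fin n)) (hcard : Λ.card = m) :
    LinearIndependent ℝ (fun j : {j // j ∈ Λ} => (fun i => Φ i (j : Fin n))) := by
  have hb1 : babel Φ (m - 1) < 1 :=
    lt_of_le_of_lt (le_add_of_nonneg_left (babel_nonneg Φ m)) h
  -- unit norms give self inner product 1
  have hGii : ∀ j : Fin n, (fun a => Φ a j) ⬝ᵥ (fun a => Φ a j) = 1 := by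
    intro j
    have := hunit j
    rw [l2norm] at this
    have h2 : ∑ i, Φ i j ^ 2 = 1 := by
      have hnn : 0 ≤ ∑ i, Φ i j ^ 2 := Finset.sum_nonneg fun _ _ => sq_nonneg _
      nlinarith [Real.sq_sqrt hnn]
    simpa [dotProduct, pow_two] using h2
  rw [Fintype.linearIndependent_iff]
  intro g hg
  by_contra hne
  push_neg at hne
  obtain ⟨j0, hj0⟩ := hne
  obtain ⟨i, -, hi⟩ := Finset.exists_max_image Finset.univ (fun j => |g j|)
    ⟨j0, Finset.mem_univ _⟩
  have hgi : 0 < |g i| := lt_of_lt_of_le (abs_pos.mpr hj0) (hi j0 (Finset.mem_univ _))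
  set G : {j // j ∈ Λ} → ℝ := fun j => (fun a => Φ a (i : Fin n)) ⬝ᵥ (fun a => Φ a (j : Fin n))
    with hGdef
  have key : ∑ j : {j // j ∈ Λ}, g j * G j = 0 := by
    have h0 := congrArg (fun v : Fin d → ℝ => (fun a => Φ a (i : Fin n)) ⬝ᵥ v) hg
    rw [hGdef]
    simp only [dotProduct, Finset.mul_sum]
    rw [Finset.sum_comm]
    simpa [dotProduct, Finset.sum_apply, Pi.smul_apply, smul_eq_mul, Finset.mul_sum,
      mul_comm, mul_left_comm, mul_assoc] using h0
  have hsplit : g i * G i + ∑ j ∈ Finset.univ.erase i, g j * G j = 0 := by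
    rw [Finset.add_sum_erase _ (fun j => g j * G j) (Finset.mem_univ i)]; exact key
  have hGi1 : G i = 1 := hGii i
  have habs : |g i| ≤ ∑ j ∈ Finset.univ.erase i, |g j| * |G j| := by
    have : g i = -(∑ j ∈ Finset.univ.erase i, g j * G j) := by
      rw [hGi1] at hsplit; linarith
    calc |g i| = |∑ j ∈ Finset.univ.erase i, g j * G j| := by rw [this, abs_neg]
      _ ≤ ∑ j ∈ Finset.univ.erase i, |g j * G j| := Finset.abs_sum_le_sum_abs _ _
      _ = ∑ j ∈ Finset.univ.erase i, |g j| * |G j| := by simp [abs_mul]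
  have hle2 : ∑ j ∈ Finset.univ.erase i, |g j| * |G j|
      ≤ |g i| * ∑ j ∈ Finset.univ.erase i, |G j| := by
    rw [Finset.mul_sum]
    exact Finset.sum_le_sum fun j hj =>
      mul_le_mul_of_nonneg_right (hi j (Finset.mem_univ _)) (abs_nonneg _)
  -- relate sum over subtype erase to sum over Λ.erase
  have hsum_eq : ∑ j ∈ Finset.univ.erase i, |G j|
      = ∑ j ∈ Λ.erase (i : Fin n), |(fun a => Φ a (i : Fin n)) ⬝ᵥ (fun a => Φ a j)| := by
    have h1 : |G i| + ∑ j ∈ Finset.univ.erase i, |G j| = ∑ j ∈ Finset.univ, |G j| :=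
      Finset.add_sum_erase _ (fun j => |G j|) (Finset.mem_univ i)
    have h2 : ∑ j ∈ Finset.univ, |G j|
        = ∑ j ∈ Λ, |(fun a => Φ a (i : Fin n)) ⬝ᵥ (fun a => Φ a j)| := by
      rw [← Finset.sum_attach Λ (fun j => |(fun a => Φ a (i : Fin n)) ⬝ᵥ (fun a => Φ a j)|)]
      rfl
    have h3 : |(fun a => Φ a (i : Fin n)) ⬝ᵥ (fun a => Φ a (i : Fin n))|
        + ∑ j ∈ Λ.erase (i : Fin n), |(fun a => Φ a (i : Fin n)) ⬝ᵥ (fun a => Φ a j)|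
        = ∑ j ∈ Λ, |(fun a => Φ a (i : Fin n)) ⬝ᵥ (fun a => Φ a j)| :=
      Finset.add_sum_erase Λ (fun j => |(fun a => Φ a ((i : {j // j ∈ Λ}) : Fin n)) ⬝ᵥ (fun a => Φ a j)|) i.2
    have : |G i| = |(fun a => Φ a (i : Fin n)) ⬝ᵥ (fun a => Φ a (i : Fin n))| := rfl
    linarith [h1, h2, h3]
  have hbb : ∑ j ∈ Λ.erase (i : Fin n), |(fun a => Φ a (i : Fin n)) ⬝ᵥ (fun a => Φ a j)|
      ≤ babel Φ (m - 1) := by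
    apply sum_le_babel
    · rw [Finset.card_erase_of_mem i.2, hcard]
    · exact Finset.notMem_erase _ _
  have : |g i| ≤ |g i| * babel Φ (m - 1) := by
    calc |g i| ≤ ∑ j ∈ Finset.univ.erase i, |g j| * |G j| := habs
      _ ≤ |g i| * ∑ j ∈ Finset.univ.erase i, |G j| := hle2
      _ = |g i| * ∑ j ∈ Λ.erase (i : Fin n),
            |(fun a => Φ a (i : Fin n)) ⬝ᵥ (fun a => Φ a j)| := by rw [hsum_eq]
      _ ≤ |g i| * babel Φ (m - 1) := mul_le_mul_of_nonneg_left hbb (abs_nonneg _)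
  have hlt : |g i| * babel Φ (m - 1) < |g i| := mul_lt_of_lt_one_right hgi hb1
  linarith
end

section
/- Suppose m < (1/2)(1/μ + 1) where μ is the coherence of Φ. If y = Φx₁ = Φx₂ with ‖x₁‖₀ ≤ m and ‖x₂‖₀ ≤ m, then x₁ = x₂ (the m-sparse representation is unique). -/
open Matrix BigOperators Finset Filter

/-- If m < (1/2)(1/μ + 1) then the m-sparse representation of a signal is unique. -/
theorem stmt6 {d n : ℕ} (Φ : Matrix (Fin d) (Fin n) ℝ)
    (hunit : ∀ j, l2norm (fun i => Φ i j) = 1)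
    (m : ℕ) (hm : (m : ℝ) < (1/2) * (1 / coh Φ + 1))
    (x₁ x₂ : Fin n → ℝ)
    (h₁ : (Finset.univ.filter fun j => x₁ j ≠ 0).card ≤ m)
    (h₂ : (Finset.univ.filter fun j => x₂ j ≠ 0).card ≤ m)
    (heq : Φ.mulVec x₁ = Φ.mulVec x₂) :
    x₁ = x₂ := by
  -- columns have unit sum of squares
  have hunit' : ∀ j, ∑ a, Φ a j ^ 2 = 1 := by
    intro j
    have h := hunit j
    unfold l2norm at h
    have hnn : 0 ≤ ∑ a, Φ a j ^ 2 := Finset.sum_nonneg fun a _ => sq_nonneg _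
    nlinarith [Real.sq_sqrt hnn]
  by_contra hne
  set z : Fin n → ℝ := fun j => x₁ j - x₂ j with hzdef
  have hzne : ∃ j, z j ≠ 0 := by
    by_contra h
    push_neg at h
    exact hne (funext fun j => by have := h j; simp [hzdef] at this ⊢; linarith)
  have hΦz : Φ.mulVec z = 0 := by
    show Φ.mulVec (x₁ - x₂) = 0
    rw [Matrix.mulVec_sub, heq, sub_self]
  set S : Finset (Fin n) := Finset.univ.filter (fun j => z j ≠ 0) with hSdef
  have hSmem : ∀ j, j ∈ S ↔ z j ≠ 0 := by intro j; simp [hSdef]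
  have hScard : S.card ≤ 2 * m := by
    have hsub : S ⊆ (Finset.univ.filter fun j => x₁ j ≠ 0) ∪
        (Finset.univ.filter fun j => x₂ j ≠ 0) := by
      intro j hj
      rw [hSmem] at hj
      simp only [Finset.mem_union, Finset.mem_filter, Finset.mem_univ, true_and]
      by_contra h
      push_neg at h
      simp [hzdef, h.1, h.2] at hj
    calc S.card ≤ _ := Finset.card_le_card hsub
      _ ≤ _ + _ := Finset.card_union_le _ _
      _ ≤ 2 * m := by omega
  -- m ≥ 1
  obtain ⟨j₀, hj₀⟩ := hzne
  have hm1 : 1 ≤ m := by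
    rcases Nat.eq_zero_or_pos m with h0 | h
    · exfalso
      subst h0
      have e1 : x₁ j₀ = 0 := by
        by_contra hx
        have : j₀ ∈ Finset.univ.filter fun j => x₁ j ≠ 0 := by simp [hx]
        have := Finset.card_pos.mpr ⟨j₀, this⟩; omega
      have e2 : x₂ j₀ = 0 := by
        by_contra hx
        have : j₀ ∈ Finset.univ.filter fun j => x₂ j ≠ 0 := by simp [hx]
        have := Finset.card_pos.mpr ⟨j₀, this⟩; omega
      exact hj₀ (by simp [hzdef, e1, e2])
    · exact h
  -- coherence bounds
  have hbdd : BddAbove {x | ∃ j k : Fin n, j ≠ k ∧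
      x = |(fun i => Φ i j) ⬝ᵥ (fun i => Φ i k)|} := by
    refine ⟨1, fun x hx => ?_⟩
    obtain ⟨j, k, _, rfl⟩ := hx
    have hcs := Finset.sum_mul_sq_le_sq_mul_sq Finset.univ (fun a => Φ a j) (fun a => Φ a k)
    rw [hunit' j, hunit' k] at hcs
    simp only [dotProduct]
    nlinarith [sq_abs (∑ a, Φ a j * Φ a k), abs_nonneg (∑ a, Φ a j * Φ a k)]
  have hcross : ∀ j k : Fin n, j ≠ k →
      |∑ a, Φ a j * Φ a k| ≤ coh Φ := by
    intro j k hjk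
    exact le_csSup hbdd ⟨j, k, hjk, rfl⟩
  have hμpos : 0 < coh Φ := by
    by_contra h
    push_neg at h
    have : 1 / coh Φ ≤ 0 := by
      rcases lt_or_eq_of_le h with h' | h'
      · exact le_of_lt (div_neg_of_pos_of_neg one_pos h')
      · simp [h']
    have : (m : ℝ) < 1 / 2 := by linarith
    have : (1 : ℝ) ≤ m := by exact_mod_cast hm1
    linarith
  have hkey : coh Φ * (2 * (m : ℝ) - 1) < 1 := by
    have h2 : 2 * (m : ℝ) - 1 < 1 / coh Φ := by linarith
    have h3 : coh Φ * (1 / coh Φ) = 1 := by field_simp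
    nlinarith [mul_lt_mul_of_pos_left h2 hμpos]
  -- pick max entry
  have hSne : S.Nonempty := ⟨j₀, (hSmem j₀).2 hj₀⟩
  obtain ⟨i, hiS, hmax⟩ := S.exists_max_image (fun j => |z j|) hSne
  have hzi : z i ≠ 0 := (hSmem i).1 hiS
  have hzipos : 0 < |z i| := abs_pos.mpr hzi
  -- key equation: ∑ j, (∑ a, Φ a i * Φ a j) * z j = 0
  have hdot : ∑ j, (∑ a, Φ a i * Φ a j) * z j = 0 := by
    have h0 : ∑ a, Φ a i * (∑ j, Φ a j * z j) = 0 := by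
      have : ∀ a, ∑ j, Φ a j * z j = 0 := fun a => congrFun hΦz a
      simp [this]
    calc ∑ j, (∑ a, Φ a i * Φ a j) * z j
        = ∑ j, ∑ a, Φ a i * Φ a j * z j := by
          refine Finset.sum_congr rfl fun j _ => ?_
          rw [Finset.sum_mul]
      _ = ∑ a, ∑ j, Φ a i * Φ a j * z j := Finset.sum_comm
      _ = ∑ a, Φ a i * (∑ j, Φ a j * z j) := by
          refine Finset.sum_congr rfl fun a _ => ?_
          rw [Finset.mul_sum]
          refine Finset.sum_congr rfl fun j _ => by ring
      _ = 0 := h0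
  -- restrict to S
  have hdotS : ∑ j ∈ S, (∑ a, Φ a i * Φ a j) * z j = 0 := by
    rw [← hdot]
    apply Finset.sum_subset (Finset.subset_univ S)
    intro j _ hj
    have : z j = 0 := by
      by_contra h; exact hj ((hSmem j).2 h)
    simp [this]
  -- separate the i term
  have hgi : ∑ a, Φ a i * Φ a i = 1 := by
    have := hunit' i
    simpa [sq] using this
  have hsplit : z i = -∑ j ∈ S.erase i, (∑ a, Φ a i * Φ a j) * z j := by
    have := Finset.add_sum_erase S (fun j => (∑ a, Φ a i * Φ a j) * z j) hiS
    rw [hdotS] at this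
    simp only [hgi, one_mul] at this
    linarith
  -- bound
  have hbound : |z i| ≤ coh Φ * (S.card - 1) * |z i| := by
    calc |z i| = |∑ j ∈ S.erase i, (∑ a, Φ a i * Φ a j) * z j| := by
          rw [hsplit, abs_neg]
      _ ≤ ∑ j ∈ S.erase i, |(∑ a, Φ a i * Φ a j) * z j| :=
          Finset.abs_sum_le_sum_abs _ _
      _ ≤ ∑ j ∈ S.erase i, coh Φ * |z i| := by
          refine Finset.sum_le_sum fun j hj => ?_
          rw [abs_mul]
          have hji : i ≠ j := fun h => (Finset.mem_erase.mp hj).1 h.symm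
          have h1 := hcross i j hji
          have h2 : |z j| ≤ |z i| := hmax j (Finset.mem_of_mem_erase hj)
          have := abs_nonneg (z j)
          nlinarith [abs_nonneg (∑ a, Φ a i * Φ a j)]
      _ = (S.erase i).card * (coh Φ * |z i|) := by
          rw [Finset.sum_const, nsmul_eq_mul]
      _ = coh Φ * (S.card - 1) * |z i| := by
          rw [Finset.card_erase_of_mem hiS]
          have hc : 1 ≤ S.card := Finset.card_pos.mpr hSne
          have : ((S.card - 1 : ℕ) : ℝ) = (S.card : ℝ) - 1 := by
            push_cast [Nat.cast_sub hc]; ring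
          rw [this]; ring
  have hcard' : (S.card : ℝ) ≤ 2 * m := by exact_mod_cast hScard
  have hfinal : coh Φ * ((S.card : ℝ) - 1) < 1 := by
    have : coh Φ * ((S.card : ℝ) - 1) ≤ coh Φ * (2 * m - 1) := by
      apply mul_le_mul_of_nonneg_left _ (le_of_lt hμpos)
      linarith
    linarith
  nlinarith
end

section
/- Under the hypotheses of the recovery theorem (m < (1/2)(1/μ + 1)), every Frank–Wolfe iterate x_k is supported in Λ_opt, i.e., x_k[i] = 0 for all i ∉ Λ_opt and all k. -/
open Matrix BigOperators Finset Filter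

/-- Under the recovery condition, every Frank–Wolfe iterate is supported in Λopt. -/
theorem stmt9 {d n : ℕ} (Φ : Matrix (Fin d) (Fin n) ℝ)
    (hunit : ∀ j, l2norm (fun i => Φ i j) = 1)
(m : ℕ) (xstar : Fin n → ℝ) (Λopt : Finset (Fin n))
    (hsupp : ∀ j, xstar j ≠ 0 ↔ j ∈ Λopt) (hcard : Λopt.card ≤ m)
    (hm : (m : ℝ) < (1/2) * (1 / coh Φ + 1))
    (β : ℝ) (hβ : 0 < β)
    (y : Fin d → ℝ) (hy : y = Φ.mulVec xstar)
    (x s : ℕ → Fin n → ℝ) (idx : ℕ → Fin n) (γ : ℕ → ℝ)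
    (hx0 : x 0 = 0)
    (hsel : ∀ k j, |(fun i => Φ i j) ⬝ᵥ (y - Φ.mulVec (x k))| ≤
      |(fun i => Φ i (idx k)) ⬝ᵥ (y - Φ.mulVec (x k))|)
    (hs : ∀ k, s k = fun j => if j = idx k then
      Real.sign ((fun i => Φ i (idx k)) ⬝ᵥ (y - Φ.mulVec (x k))) * β else 0)
    (hγmem : ∀ k, γ k ∈ Set.Icc (0 : ℝ) 1)
    (hγmin : ∀ k, ∀ γ' ∈ Set.Icc (0 : ℝ) 1,
      ∑ i, (y i - Φ.mulVec (x k + γ k • (s k - x k)) i) ^ 2 ≤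
        ∑ i, (y i - Φ.mulVec (x k + γ' • (s k - x k)) i) ^ 2)
    (hupd : ∀ k, x (k + 1) = x k + γ k • (s k - x k)) :
    ∀ k, ∀ j ∉ Λopt, x k j = 0 := by
  -- Gram matrix diagonal is 1
  have hdiag : ∀ j : Fin n, (∑ i, Φ i j * Φ i j) = 1 := by
    intro j
    have h := hunit j
    unfold l2norm at h
    have hnn : (0:ℝ) ≤ ∑ i, Φ i j ^ 2 := Finset.sum_nonneg fun i _ => sq_nonneg _
    have h2 : (∑ i, Φ i j ^ 2) = 1 := by
      nlinarith [Real.sq_sqrt hnn]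
    simpa [sq] using h2
  -- Off-diagonal Gram entries are bounded by the coherence
  have hcoh : ∀ j p : Fin n, j ≠ p →
      |(fun i => Φ i j) ⬝ᵥ (fun i => Φ i p)| ≤ coh Φ := by
    intro j p hjp
    apply le_csSup
    · refine ⟨1, ?_⟩
      rintro xx ⟨a, b, hab, rfl⟩
      have h1 : ((fun i => Φ i a) ⬝ᵥ (fun i => Φ i b)) ^ 2 ≤ 1 := by
        have := Finset.sum_mul_sq_le_sq_mul_sq Finset.univ (fun i => Φ i a) (fun i => Φ i b)
        have ha : (∑ i, Φ i a ^ 2) = 1 := by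
          have := hdiag a; simpa [sq] using this
        have hb : (∑ i, Φ i b ^ 2) = 1 := by
          have := hdiag b; simpa [sq] using this
        simpa [dotProduct, ha, hb] using this
      nlinarith [abs_nonneg ((fun i => Φ i a) ⬝ᵥ (fun i => Φ i b)),
        sq_abs ((fun i => Φ i a) ⬝ᵥ (fun i => Φ i b))]
    · exact ⟨j, p, hjp, rfl⟩
  have hcoh0 : 0 ≤ coh Φ := by
    apply Real.sSup_nonneg
    rintro xx ⟨a, b, hab, rfl⟩
    exact abs_nonneg _
  intro k
  induction k with
  | zero => intro j hj; simp [hx0]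
  | succ k ih =>
    have hzsupp : ∀ p, p ∉ Λopt → (xstar - x k) p = 0 := by
      intro p hp
      have h1 : xstar p = 0 := by
        by_contra h; exact hp ((hsupp p).mp h)
      simp [h1, ih p hp]
    have hres : y - Φ.mulVec (x k) = Φ.mulVec (xstar - x k) := by
      rw [hy, Matrix.mulVec_sub]
    have hcorr : ∀ j : Fin n, (fun i => Φ i j) ⬝ᵥ (y - Φ.mulVec (x k)) =
        ∑ p ∈ Λopt, (xstar - x k) p * (∑ i, Φ i j * Φ i p) := by
      intro j
      rw [hres]
      have h1 : (fun i => Φ i j) ⬝ᵥ Φ.mulVec (xstar - x k) =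
          ∑ p : Fin n, (xstar - x k) p * (∑ i, Φ i j * Φ i p) := by
        simp only [dotProduct, Matrix.mulVec, Finset.mul_sum]
        rw [Finset.sum_comm]
        refine Finset.sum_congr rfl fun p _ => ?_
        exact Finset.sum_congr rfl fun i _ => by ring
      rw [h1]
      exact (Finset.sum_subset (Finset.subset_univ _)
        (fun p _ hp => by rw [hzsupp p hp, zero_mul])).symm
    by_cases hzz : ∀ p ∈ Λopt, (xstar - x k) p = 0
    · -- residual is zero: the step direction is zero
      have hc0 : ∀ j : Fin n, (fun i => Φ i j) ⬝ᵥ (y - Φ.mulVec (x k)) = 0 := by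
        intro j; rw [hcorr]
        exact Finset.sum_eq_zero fun p hp => by rw [hzz p hp, zero_mul]
      intro j hj
      have hsk : s k j = 0 := by
        rw [hs]
        by_cases h : j = idx k <;> simp [h, hc0]
      rw [hupd]
      simp [hsk, ih j hj]
    · push_neg at hzz
      obtain ⟨p0, hp0, hp0ne⟩ := hzz
      have hm1 : 1 ≤ m := le_trans (Finset.card_pos.mpr ⟨p0, hp0⟩) hcard
      have hμpos : 0 < coh Φ := by
        rcases eq_or_lt_of_le hcoh0 with h | h
        · exfalso
          rw [← h] at hm
          simp only [div_zero] at hm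
          have : (1:ℝ) ≤ (m:ℝ) := by exact_mod_cast hm1
          linarith
        · exact h
      obtain ⟨j0, hj0, hj0max⟩ :=
        Finset.exists_max_image Λopt (fun p => |(xstar - x k) p|) ⟨p0, hp0⟩
      set μ := coh Φ with hμ
      set M := |(xstar - x k) j0| with hM
      have hMpos : 0 < M := lt_of_lt_of_le (abs_pos.mpr hp0ne) (hj0max p0 hp0)
      -- off-support correlation bound
      have hoff : ∀ q : Fin n, q ∉ Λopt →
          |(fun i => Φ i q) ⬝ᵥ (y - Φ.mulVec (x k))| ≤ (m:ℝ) * μ * M := by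
        intro q hq
        rw [hcorr]
        calc |∑ p ∈ Λopt, (xstar - x k) p * (∑ i, Φ i q * Φ i p)|
            ≤ ∑ p ∈ Λopt, |(xstar - x k) p * (∑ i, Φ i q * Φ i p)| :=
              Finset.abs_sum_le_sum_abs _ _
          _ ≤ ∑ p ∈ Λopt, M * μ := by
              refine Finset.sum_le_sum fun p hp => ?_
              rw [abs_mul]
              have h1 : |(xstar - x k) p| ≤ M := hj0max p hp
              have h2 : |∑ i, Φ i q * Φ i p| ≤ μ := by
                have hne : q ≠ p := fun h => hq (h ▸ hp)
                simpa [dotProduct] using hcoh q p hne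
              exact mul_le_mul h1 h2 (abs_nonneg _) hMpos.le
          _ = (Λopt.card : ℝ) * (M * μ) := by
              rw [Finset.sum_const, nsmul_eq_mul]
          _ ≤ (m:ℝ) * μ * M := by
              have : (Λopt.card : ℝ) ≤ (m:ℝ) := by exact_mod_cast hcard
              nlinarith [mul_pos hMpos hμpos]
      -- on-support correlation lower bound
      have hon : M - ((m:ℝ) - 1) * μ * M ≤
          |(fun i => Φ i j0) ⬝ᵥ (y - Φ.mulVec (x k))| := by
        rw [hcorr]
        rw [← Finset.add_sum_erase _ _ hj0, hdiag j0, mul_one]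
        set r := ∑ p ∈ Λopt.erase j0, (xstar - x k) p * (∑ i, Φ i j0 * Φ i p) with hr
        have h1 : |r| ≤ ((m:ℝ) - 1) * μ * M := by
          calc |r| ≤ ∑ p ∈ Λopt.erase j0, |(xstar - x k) p * (∑ i, Φ i j0 * Φ i p)| :=
                Finset.abs_sum_le_sum_abs _ _
            _ ≤ ∑ p ∈ Λopt.erase j0, M * μ := by
                refine Finset.sum_le_sum fun p hp => ?_
                rw [abs_mul]
                have h1 : |(xstar - x k) p| ≤ M := hj0max p (Finset.mem_of_mem_erase hp)
                have h2 : |∑ i, Φ i j0 * Φ i p| ≤ μ := by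
                  have hne : j0 ≠ p := (Finset.ne_of_mem_erase hp).symm
                  simpa [dotProduct] using hcoh j0 p hne
                exact mul_le_mul h1 h2 (abs_nonneg _) hMpos.le
            _ = ((Λopt.erase j0).card : ℝ) * (M * μ) := by
                rw [Finset.sum_const, nsmul_eq_mul]
            _ ≤ ((m:ℝ) - 1) * μ * M := by
                have hcd : (Λopt.erase j0).card = Λopt.card - 1 :=
                  Finset.card_erase_of_mem hj0
                have hcd2 : ((Λopt.erase j0).card : ℝ) ≤ (m:ℝ) - 1 := by
                  rw [hcd]
                  have h3 : Λopt.card - 1 ≤ m - 1 := Nat.sub_le_sub_right hcard 1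
                  have h4 : ((Λopt.card - 1 : ℕ) : ℝ) ≤ ((m - 1 : ℕ) : ℝ) := by
                    exact_mod_cast h3
                  rw [Nat.cast_sub hm1] at h4
                  simpa using h4
                nlinarith [mul_pos hMpos hμpos]
        have h2 : M ≤ |(xstar - x k) j0 + r| + |r| := by
          have h3 := abs_add_le ((xstar - x k) j0 + r) (-r)
          simpa [hM] using h3
        linarith
      have hlt : (m:ℝ) * μ * M < M - ((m:ℝ) - 1) * μ * M := by
        have h2m : (m:ℝ) * μ < (1/2) * (1 + μ) := by
          have h := mul_lt_mul_of_pos_right hm hμpos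
          calc (m:ℝ) * μ < (1/2) * (1/μ + 1) * μ := h
            _ = (1/2) * (1 + μ) := by field_simp
        nlinarith
      have hidx : idx k ∈ Λopt := by
        by_contra hidxn
        have h1 := hsel k j0
        have h2 := hoff (idx k) hidxn
        linarith
      intro j hj
      have hjne : j ≠ idx k := fun h => hj (h ▸ hidx)
      have hsk : s k j = 0 := by rw [hs]; simp [hjne]
      rw [hupd]
      simp [hsk, ih j hj]
end

section
/- Assume m < (1/2)(1/μ + 1) and ‖x*‖₁ ≤ β. If the Frank–Wolfe objective values f(x_k) = ½‖y − Φx_k‖₂² converge to 0 and every iterate x_k is supported in Λ_opt, then x_k → x* in ℓ² norm; more precisely ½(λ*_min)²‖x* − x_k‖₂² ≤ f(x_k), where λ*_min > 0 is the smallest singular value of Φ_{Λ_opt}. -/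
open Matrix BigOperators Finset Filter

/-- If f(x_k) → 0 and every iterate is supported in Λopt, then x_k → x* in ℓ²,
with the quantitative bound ½(λ*min)²‖x* − x_k‖₂² ≤ f(x_k), where λ*min is the
smallest singular value of Φ_{Λopt}. -/
theorem stmt10 {d n : ℕ} (Φ : Matrix (Fin d) (Fin n) ℝ)
    (hunit : ∀ j, l2norm (fun i => Φ i j) = 1)
    (m : ℕ) (xstar : Fin n → ℝ) (Λopt : Finset (Fin n))
    (hsupp : ∀ j, xstar j ≠ 0 ↔ j ∈ Λopt) (hcard : Λopt.card ≤ m)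
    (hm : (m : ℝ) < (1/2) * (1 / coh Φ + 1))
    (β : ℝ) (hβ : 0 < β) (hx1β : l1norm xstar ≤ β)
    (y : Fin d → ℝ) (hy : y = Φ.mulVec xstar)
    (lammin : ℝ)
    (hlammin : IsLeast
      {t | ∃ c : {j // j ∈ Λopt} → ℝ, (∑ j, c j ^ 2) = 1 ∧
        t = l2norm (fun i => ∑ j : {j // j ∈ Λopt}, Φ i (j : Fin n) * c j)} lammin)
    (x : ℕ → Fin n → ℝ)
    (hconv : Tendsto (fun k => (1/2 : ℝ) * ∑ i, (y i - Φ.mulVec (x k) i) ^ 2)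
      atTop (nhds 0))
    (hxsupp : ∀ k, ∀ j ∉ Λopt, x k j = 0) :
    0 < lammin ∧
    (∀ k, (1/2) * lammin ^ 2 * ∑ j, (xstar j - x k j) ^ 2 ≤
      (1/2) * ∑ i, (y i - Φ.mulVec (x k) i) ^ 2) ∧
    Tendsto (fun k => l2norm (xstar - x k)) atTop (nhds 0) := by

  classical
  set μ := coh Φ with hμdef
  have hG1 : ∀ j : Fin n, (∑ i, Φ i j ^ 2) = 1 := by
    intro j
    have h := hunit j
    unfold l2norm at h
    have hnn : (0:ℝ) ≤ ∑ i, Φ i j ^ 2 := Finset.sum_nonneg fun i _ => sq_nonneg _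
    nlinarith [Real.sq_sqrt hnn]
  have hGμ : ∀ j k : Fin n, j ≠ k → |∑ i, Φ i j * Φ i k| ≤ μ := by
    intro j k hjk
    have hbdd : BddAbove {x | ∃ j k : Fin n, j ≠ k ∧
        x = |(fun i => Φ i j) ⬝ᵥ (fun i => Φ i k)|} := by
      refine ⟨1, fun t ht => ?_⟩
      obtain ⟨a, b, hab, rfl⟩ := ht
      have hcs := Finset.sum_mul_sq_le_sq_mul_sq Finset.univ (fun i => Φ i a) (fun i => Φ i b)
      rw [hG1 a, hG1 b] at hcs
      have : ((fun i => Φ i a) ⬝ᵥ fun i => Φ i b) ^ 2 ≤ 1 := by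
        simpa [dotProduct] using hcs
      exact (sq_le_one_iff_abs_le_one _).mp this
    have hmem : |∑ i, Φ i j * Φ i k| ∈ {x | ∃ j k : Fin n, j ≠ k ∧
        x = |(fun i => Φ i j) ⬝ᵥ (fun i => Φ i k)|} :=
      ⟨j, k, hjk, by simp [dotProduct]⟩
    exact le_csSup hbdd hmem
  obtain ⟨c₀, hc₀, hlameq⟩ := hlammin.1
  have hne : Λopt.Nonempty := by
    by_contra h
    rw [Finset.not_nonempty_iff_eq_empty] at h
    haveI : IsEmpty {j // j ∈ Λopt} := ⟨fun j => by simp [h] at j; exact j.2⟩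
    simp at hc₀
  have hm1 : (1:ℝ) ≤ m := by
    have h1 : 1 ≤ Λopt.card := Finset.card_pos.mpr hne
    exact_mod_cast le_trans h1 hcard
  have hμpos : 0 < μ := by
    by_contra h
    push_neg at h
    have h1 : 1 / μ ≤ 0 := one_div_nonpos.mpr h
    linarith [hm]
  have hμm : μ * (2 * m - 1) < 1 := by
    have h1 : 2 * (m:ℝ) - 1 < 1 / μ := by linarith
    have := (lt_div_iff₀ hμpos).mp h1
    linarith
  have hgap : 0 < 1 - μ * (m - 1) := by nlinarith
  have hquad : ∀ v : {j // j ∈ Λopt} → ℝ, (∑ j, v j ^ 2) = 1 →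
      1 - μ * (m - 1) ≤ ∑ i, (∑ j : {j // j ∈ Λopt}, Φ i (j : Fin n) * v j) ^ 2 := by
    intro v hv
    have hexp : ∑ i, (∑ j : {j // j ∈ Λopt}, Φ i (j : Fin n) * v j) ^ 2
        = ∑ j : {j // j ∈ Λopt}, ∑ j' : {j // j ∈ Λopt},
            v j * v j' * ∑ i, Φ i (j : Fin n) * Φ i (j' : Fin n) := by
      have h0 : ∀ i, (∑ j : {j // j ∈ Λopt}, Φ i (j : Fin n) * v j) ^ 2
          = ∑ j : {j // j ∈ Λopt}, ∑ j' : {j // j ∈ Λopt},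
              v j * v j' * (Φ i (j : Fin n) * Φ i (j' : Fin n)) := by
        intro i
        rw [sq, Finset.sum_mul_sum]
        exact Finset.sum_congr rfl fun j _ => Finset.sum_congr rfl fun j' _ => by ring
      rw [Finset.sum_congr rfl fun i _ => h0 i, Finset.sum_comm]
      refine Finset.sum_congr rfl fun j _ => ?_
      rw [Finset.sum_comm]
      refine Finset.sum_congr rfl fun j' _ => ?_
      rw [Finset.mul_sum]
    rw [hexp]
    have hterm : ∀ j j' : {j // j ∈ Λopt},
        (if j = j' then (1 + μ) * v j ^ 2 else 0) - μ * (|v j| * |v j'|)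
          ≤ v j * v j' * ∑ i, Φ i (j : Fin n) * Φ i (j' : Fin n) := by
      intro j j'
      by_cases h : j = j'
      · subst h
        have hd : (∑ i, Φ i (j : Fin n) * Φ i (j : Fin n)) = 1 := by
          simpa [sq] using hG1 (j : Fin n)
        have ha : |v j| * |v j| = v j ^ 2 := by rw [← abs_mul, sq, abs_mul_self]
        rw [if_pos rfl, hd, ha]
        apply le_of_eq; ring
      · rw [if_neg h]
        have hjj' : (j : Fin n) ≠ (j' : Fin n) := fun hc => h (Subtype.ext hc)
        have hG := hGμ _ _ hjj'
        have h1 : |v j * v j' * ∑ i, Φ i (j : Fin n) * Φ i (j' : Fin n)|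
            ≤ |v j| * |v j'| * μ := by
          rw [abs_mul, abs_mul]
          exact mul_le_mul_of_nonneg_left hG (by positivity)
        have h2 := neg_abs_le (v j * v j' * ∑ i, Φ i (j : Fin n) * Φ i (j' : Fin n))
        nlinarith
    have hsum := Finset.sum_le_sum fun j (_ : j ∈ Finset.univ) =>
      Finset.sum_le_sum fun j' (_ : j' ∈ Finset.univ) => hterm j j'
    have h1 : (∑ j : {j // j ∈ Λopt}, ∑ j' : {j // j ∈ Λopt},
        if j = j' then (1 + μ) * v j ^ 2 else 0) = 1 + μ := by
      have h0 : ∀ j : {j // j ∈ Λopt}, (∑ j' : {j // j ∈ Λopt},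
          if j = j' then (1 + μ) * v j ^ 2 else 0) = (1 + μ) * v j ^ 2 := by
        intro j
        rw [Finset.sum_ite_eq Finset.univ j (fun _ => (1 + μ) * v j ^ 2),
          if_pos (Finset.mem_univ j)]
      rw [Finset.sum_congr rfl fun j _ => h0 j, ← Finset.mul_sum, hv, mul_one]
    have h2 : (∑ j : {j // j ∈ Λopt}, ∑ j' : {j // j ∈ Λopt},
        μ * (|v j| * |v j'|)) = μ * (∑ j : {j // j ∈ Λopt}, |v j|) ^ 2 := by
      rw [sq, Finset.sum_mul_sum, Finset.mul_sum]
      refine Finset.sum_congr rfl fun j _ => ?_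
      rw [Finset.mul_sum]
    have hlhs : ∑ j : {j // j ∈ Λopt}, ∑ j' : {j // j ∈ Λopt},
        ((if j = j' then (1 + μ) * v j ^ 2 else 0) - μ * (|v j| * |v j'|))
        = (1 + μ) - μ * (∑ j : {j // j ∈ Λopt}, |v j|) ^ 2 := by
      simp only [Finset.sum_sub_distrib]
      rw [h1, h2]
    have hA : (∑ j : {j // j ∈ Λopt}, |v j|) ^ 2 ≤ m := by
      have hcs := sq_sum_le_card_mul_sum_sq (s := (Finset.univ : Finset {j // j ∈ Λopt}))
        (f := fun j => |v j|)
      have hcc : ((Finset.univ : Finset {j // j ∈ Λopt}).card : ℝ) = Λopt.card := by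
        simp [Finset.card_univ]
      have habs : ∑ j : {j // j ∈ Λopt}, |v j| ^ 2 = 1 := by
        rw [← hv]; exact Finset.sum_congr rfl fun j _ => sq_abs _
      rw [habs, hcc, mul_one] at hcs
      exact le_trans hcs (by exact_mod_cast hcard)
    calc 1 - μ * (m - 1) = (1 + μ) - μ * m := by ring
    _ ≤ (1 + μ) - μ * (∑ j : {j // j ∈ Λopt}, |v j|) ^ 2 := by nlinarith
    _ = _ := hlhs.symm
    _ ≤ _ := hsum
  have hlamnn : 0 ≤ lammin := hlameq ▸ Real.sqrt_nonneg _
  have hlamsq : 1 - μ * (m - 1) ≤ lammin ^ 2 := by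
    have h := hquad c₀ hc₀
    have hnn : (0:ℝ) ≤ ∑ i, (∑ j : {j // j ∈ Λopt}, Φ i (j : Fin n) * c₀ j) ^ 2 :=
      Finset.sum_nonneg fun i _ => sq_nonneg _
    rw [hlameq]
    unfold l2norm
    rw [Real.sq_sqrt hnn]
    exact h
  have hlampos : 0 < lammin := by
    rcases hlamnn.lt_or_eq with h | h
    · exact h
    · exfalso; rw [← h] at hlamsq; nlinarith
  have hkey : ∀ e : Fin n → ℝ, (∀ j ∉ Λopt, e j = 0) →
      lammin ^ 2 * ∑ j, e j ^ 2 ≤ ∑ i, (Φ.mulVec e i) ^ 2 := by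
    intro e he
    set S := ∑ j, e j ^ 2 with hSdef
    have hSnn : 0 ≤ S := Finset.sum_nonneg fun j _ => sq_nonneg _
    rcases hSnn.lt_or_eq with hS | hS
    · set v : {j // j ∈ Λopt} → ℝ := fun j => e (j : Fin n) / Real.sqrt S with hvdef
      have hsubS : ∑ j : {j // j ∈ Λopt}, e (j : Fin n) ^ 2 = S := by
        rw [Finset.sum_coe_sort Λopt (fun j => e j ^ 2)]
        refine Finset.sum_subset (Finset.subset_univ _) fun j _ hj => ?_
        rw [he j hj]; ring
      have hv1 : (∑ j, v j ^ 2) = 1 := by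
        have h0 : ∀ j : {j // j ∈ Λopt}, v j ^ 2 = e (j : Fin n) ^ 2 / S := by
          intro j
          simp only [hvdef]
          rw [div_pow, Real.sq_sqrt (le_of_lt hS)]
        rw [Finset.sum_congr rfl fun j _ => h0 j, ← Finset.sum_div, hsubS,
          div_self (ne_of_gt hS)]
      have hmem : l2norm (fun i => ∑ j : {j // j ∈ Λopt}, Φ i (j : Fin n) * v j) ∈
          {t | ∃ c : {j // j ∈ Λopt} → ℝ, (∑ j, c j ^ 2) = 1 ∧
            t = l2norm (fun i => ∑ j : {j // j ∈ Λopt}, Φ i (j : Fin n) * c j)} :=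
        ⟨v, hv1, rfl⟩
      have hle := hlammin.2 hmem
      have hfun : ∀ i, (∑ j : {j // j ∈ Λopt}, Φ i (j : Fin n) * v j)
          = Φ.mulVec e i / Real.sqrt S := by
        intro i
        simp only [hvdef]
        have h0 : ∀ j : {j // j ∈ Λopt},
            Φ i (j : Fin n) * (e (j : Fin n) / Real.sqrt S)
              = Φ i (j : Fin n) * e (j : Fin n) / Real.sqrt S := fun j => by ring
        rw [Finset.sum_congr rfl fun j _ => h0 j, ← Finset.sum_div]
        congr 1
        rw [Finset.sum_coe_sort Λopt (fun j => Φ i j * e j)]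
        rw [Matrix.mulVec, dotProduct]
        refine Finset.sum_subset (Finset.subset_univ _) fun j _ hj => ?_
        rw [he j hj]; ring
      have hl2 : l2norm (fun i => ∑ j : {j // j ∈ Λopt}, Φ i (j : Fin n) * v j)
          = Real.sqrt ((∑ i, (Φ.mulVec e i) ^ 2) / S) := by
        unfold l2norm
        congr 1
        have h0 : ∀ i, (fun i => ∑ j : {j // j ∈ Λopt}, Φ i (j : Fin n) * v j) i ^ 2
            = (Φ.mulVec e i) ^ 2 / S := by
          intro i
          simp only
          rw [hfun i, div_pow, Real.sq_sqrt (le_of_lt hS)]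
        rw [Finset.sum_congr rfl fun i _ => h0 i, ← Finset.sum_div]
      rw [hl2] at hle
      have h2 : lammin ^ 2 ≤ (∑ i, (Φ.mulVec e i) ^ 2) / S :=
        (Real.le_sqrt' hlampos).mp hle
      calc lammin ^ 2 * S ≤ ((∑ i, (Φ.mulVec e i) ^ 2) / S) * S :=
            mul_le_mul_of_nonneg_right h2 (le_of_lt hS)
      _ = ∑ i, (Φ.mulVec e i) ^ 2 := div_mul_cancel₀ _ (ne_of_gt hS)
    · rw [← hS, mul_zero]
      exact Finset.sum_nonneg fun i _ => sq_nonneg _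
  have hres : ∀ k (i : Fin d), y i - Φ.mulVec (x k) i
      = Φ.mulVec (fun j => xstar j - x k j) i := by
    intro k i
    rw [hy]
    have h0 : (fun j => xstar j - x k j) = xstar - x k := rfl
    rw [h0, Matrix.mulVec_sub]
    rfl
  have hmain : ∀ k, (1/2 : ℝ) * lammin ^ 2 * ∑ j, (xstar j - x k j) ^ 2 ≤
      (1/2) * ∑ i, (y i - Φ.mulVec (x k) i) ^ 2 := by
    intro k
    have he : ∀ j ∉ Λopt, xstar j - x k j = 0 := by
      intro j hj
      have h1 : xstar j = 0 := by
        by_contra h; exact hj ((hsupp j).mp h)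
      rw [h1, hxsupp k j hj, sub_zero]
    have hk := hkey (fun j => xstar j - x k j) he
    have hR : ∑ i, (y i - Φ.mulVec (x k) i) ^ 2
        = ∑ i, (Φ.mulVec (fun j => xstar j - x k j) i) ^ 2 :=
      Finset.sum_congr rfl fun i _ => by rw [hres k i]
    rw [hR]
    linarith
  refine ⟨hlampos, hmain, ?_⟩
  have hl2pos : (0:ℝ) < lammin ^ 2 := by positivity
  have hub : ∀ k, l2norm (xstar - x k) ≤
      Real.sqrt ((2 / lammin ^ 2) * ((1/2) * ∑ i, (y i - Φ.mulVec (x k) i) ^ 2)) := by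
    intro k
    unfold l2norm
    apply Real.sqrt_le_sqrt
    have hmk := hmain k
    have heq : ∑ j, (xstar - x k) j ^ 2 = ∑ j, (xstar j - x k j) ^ 2 :=
      Finset.sum_congr rfl fun j _ => by rw [Pi.sub_apply]
    have hrhs : (2 / lammin ^ 2) * ((1/2) * ∑ i, (y i - Φ.mulVec (x k) i) ^ 2)
        = (∑ i, (y i - Φ.mulVec (x k) i) ^ 2) / lammin ^ 2 := by
      field_simp
    rw [heq, hrhs, le_div_iff₀ hl2pos]
    nlinarith
  have htend : Tendsto (fun k => Real.sqrt ((2 / lammin ^ 2) *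
      ((1/2) * ∑ i, (y i - Φ.mulVec (x k) i) ^ 2))) atTop (nhds 0) := by
    have h1 : Tendsto (fun k => (2 / lammin ^ 2) *
        ((1/2 : ℝ) * ∑ i, (y i - Φ.mulVec (x k) i) ^ 2)) atTop (nhds 0) := by
      have := hconv.const_mul (2 / lammin ^ 2)
      simpa using this
    have h2 := (Real.continuous_sqrt.tendsto 0).comp h1
    simpa [Function.comp_def] using h2
  exact squeeze_zero (fun k => Real.sqrt_nonneg _) hub htend
end

section
/- In the Frank–Wolfe algorithm as above with ‖y‖₂ < β: for every iteration k with γ_k ≠ 0, the clipped step size equals the exact line-search value, γ_k = ⟨Φ(s_k − x_k), r_k⟩ / ‖Φ(s_k − x_k)‖₂². -/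
open Matrix BigOperators Finset Filter

private lemma aux_quad {d : ℕ} (a b : Fin d → ℝ) (t : ℝ) :
    ∑ i, (a i - t * b i)^2 =
      (∑ i, a i^2) - 2*t*(∑ i, b i * a i) + t^2 * (∑ i, b i^2) := by
  have h : ∀ i : Fin d, (a i - t * b i)^2
      = a i^2 - 2*t*(b i * a i) + t^2 * b i^2 := fun i => by ring
  simp_rw [h]
  rw [Finset.sum_add_distrib, Finset.sum_sub_distrib, ← Finset.mul_sum, ← Finset.mul_sum]

private lemma aux_sign_cases (t : ℝ) :
    Real.sign t = -1 ∨ Real.sign t = 0 ∨ Real.sign t = 1 := by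
  rcases lt_trichotomy t 0 with h | h | h
  · exact Or.inl (Real.sign_of_neg h)
  · exact Or.inr (Or.inl (by rw [h, Real.sign_zero]))
  · exact Or.inr (Or.inr (Real.sign_of_pos h))

private lemma aux_sign_mul (t : ℝ) : Real.sign t * t = |t| := by
  rcases lt_trichotomy t 0 with h | h | h
  · rw [Real.sign_of_neg h, abs_of_neg h]; ring
  · simp [h]
  · rw [Real.sign_of_pos h, abs_of_pos h]; ring

set_option maxHeartbeats 1600000 in
/-- In the Frank–Wolfe algorithm with ‖y‖₂ < β, any nonzero clipped step size
equals the exact line-search value ⟨Φ(s_k−x_k), r_k⟩ / ‖Φ(s_k−x_k)‖₂². -/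
theorem stmt13 {d n : ℕ} (Φ : Matrix (Fin d) (Fin n) ℝ)
    (hunit : ∀ j, l2norm (fun i => Φ i j) = 1)
    (β : ℝ) (hβ : 0 < β)
    (y : Fin d → ℝ) (hyβ : l2norm y < β)
    (x s : ℕ → Fin n → ℝ) (idx : ℕ → Fin n) (γ : ℕ → ℝ)
    (hx0 : x 0 = 0)
    (hsel : ∀ k j, |(fun i => Φ i j) ⬝ᵥ (y - Φ.mulVec (x k))| ≤
      |(fun i => Φ i (idx k)) ⬝ᵥ (y - Φ.mulVec (x k))|)
    (hs : ∀ k, s k = fun j => if j = idx k then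
      Real.sign ((fun i => Φ i (idx k)) ⬝ᵥ (y - Φ.mulVec (x k))) * β else 0)
    (hγmem : ∀ k, γ k ∈ Set.Icc (0 : ℝ) 1)
    (hγmin : ∀ k, ∀ γ' ∈ Set.Icc (0 : ℝ) 1,
      ∑ i, (y i - Φ.mulVec (x k + γ k • (s k - x k)) i) ^ 2 ≤
        ∑ i, (y i - Φ.mulVec (x k + γ' • (s k - x k)) i) ^ 2)
    (hupd : ∀ k, x (k + 1) = x k + γ k • (s k - x k))
    (hne : ∀ k, Φ.mulVec (s k - x k) ≠ 0) :
    ∀ k, γ k ≠ 0 →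
      γ k = (Φ.mulVec (s k - x k) ⬝ᵥ (y - Φ.mulVec (x k))) /
        (Φ.mulVec (s k - x k) ⬝ᵥ Φ.mulVec (s k - x k)) := by
  -- unit columns, squared form
  have hcol : ∀ j, ∑ i, (Φ i j)^2 = 1 := by
    intro j
    have h0 : (0:ℝ) ≤ ∑ i, (Φ i j)^2 := Finset.sum_nonneg fun i _ => sq_nonneg _
    have h1 := hunit j
    unfold l2norm at h1
    nlinarith [Real.sq_sqrt h0]
  have hy0 : (0:ℝ) ≤ ∑ i, (y i)^2 := Finset.sum_nonneg fun i _ => sq_nonneg _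
  have hy2 : ∑ i, (y i)^2 < β^2 := by
    unfold l2norm at hyβ
    nlinarith [Real.sq_sqrt hy0, Real.sqrt_nonneg (∑ i, (y i)^2)]
  -- objective expansion
  have hf : ∀ (m : ℕ) (t : ℝ),
      ∑ i, (y i - Φ.mulVec (x m + t • (s m - x m)) i)^2 =
        (∑ i, (y i - Φ.mulVec (x m) i)^2)
          - 2*t*(∑ i, Φ.mulVec (s m - x m) i * (y i - Φ.mulVec (x m) i))
          + t^2 * (∑ i, (Φ.mulVec (s m - x m) i)^2) := by
    intro m t
    have e : ∀ i, y i - Φ.mulVec (x m + t • (s m - x m)) i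
        = (y i - Φ.mulVec (x m) i) - t * (Φ.mulVec (s m - x m) i) := by
      intro i
      rw [Matrix.mulVec_add, Matrix.mulVec_smul]
      simp [smul_eq_mul]
      ring
    calc ∑ i, (y i - Φ.mulVec (x m + t • (s m - x m)) i)^2
        = ∑ i, ((y i - Φ.mulVec (x m) i) - t * (Φ.mulVec (s m - x m) i))^2 :=
          Finset.sum_congr rfl (fun i _ => by rw [e i])
      _ = _ := aux_quad _ _ t
  -- value of Φ.mulVec (s m)
  have hmv : ∀ (m : ℕ) (i : Fin d), Φ.mulVec (s m) i =
      Real.sign ((fun i => Φ i (idx m)) ⬝ᵥ (y - Φ.mulVec (x m))) * β * Φ i (idx m) := by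
    intro m i
    set c : ℝ := Real.sign ((fun i => Φ i (idx m)) ⬝ᵥ (y - Φ.mulVec (x m))) * β with hc
    rw [hs m]
    show (Φ.mulVec (fun j => if j = idx m then c else 0)) i = c * Φ i (idx m)
    simp only [Matrix.mulVec, dotProduct, mul_ite, mul_zero]
    rw [Finset.sum_ite_eq' Finset.univ (idx m) (fun j => Φ i j * c)]
    simp [mul_comm]
  -- step-0 correlation
  set g0 : ℝ := ∑ i, Φ i (idx 0) * y i with hg0
  have hdp0 : (fun i => Φ i (idx 0)) ⬝ᵥ (y - Φ.mulVec (x 0)) = g0 := by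
    rw [hx0]
    simp [dotProduct, hg0]
  have hg0sq : g0^2 ≤ ∑ i, (y i)^2 := by
    have := Finset.sum_mul_sq_le_sq_mul_sq Finset.univ (fun i => Φ i (idx 0)) y
    rw [hcol (idx 0)] at this
    simpa using this
  have hg0abs : |g0| < β := by
    nlinarith [abs_nonneg g0, sq_abs g0]
  -- bound on residual after step 0
  have h1bound : ∑ i, (y i - Φ.mulVec (x 1) i)^2 ≤ (∑ i, (y i)^2) - g0^2 := by
    have hmem : |g0|/β ∈ Set.Icc (0:ℝ) 1 := by
      constructor
      · positivity
      · rw [div_le_one hβ]; exact le_of_lt hg0abs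
    have h := hγmin 0 (|g0|/β) hmem
    rw [← hupd 0] at h
    rw [Nat.zero_add] at h
    rw [hf 0 (|g0|/β)] at h
    -- compute the two inner sums at step 0
    have hV0 : ∀ i, Φ.mulVec (s 0 - x 0) i = Real.sign g0 * β * Φ i (idx 0) := by
      intro i
      rw [hx0, sub_zero, hmv 0 i, hdp0]
    have hR0 : ∀ i, y i - Φ.mulVec (x 0) i = y i := by
      intro i; rw [hx0]; simp
    have hA0 : (∑ i, Φ.mulVec (s 0 - x 0) i * (y i - Φ.mulVec (x 0) i)) = β * |g0| := by
      calc (∑ i, Φ.mulVec (s 0 - x 0) i * (y i - Φ.mulVec (x 0) i))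
          = ∑ i, Real.sign g0 * β * (Φ i (idx 0) * y i) := by
            apply Finset.sum_congr rfl; intro i _; rw [hV0 i, hR0 i]; ring
        _ = Real.sign g0 * β * g0 := by rw [← Finset.mul_sum, hg0]
        _ = β * (Real.sign g0 * g0) := by ring
        _ = β * |g0| := by rw [aux_sign_mul]
    have hB0 : (∑ i, (Φ.mulVec (s 0 - x 0) i)^2) = (Real.sign g0)^2 * β^2 := by
      calc (∑ i, (Φ.mulVec (s 0 - x 0) i)^2)
          = ∑ i, (Real.sign g0)^2 * β^2 * (Φ i (idx 0))^2 := by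
            apply Finset.sum_congr rfl; intro i _; rw [hV0 i]; ring
        _ = (Real.sign g0)^2 * β^2 * ∑ i, (Φ i (idx 0))^2 := by rw [← Finset.mul_sum]
        _ = (Real.sign g0)^2 * β^2 := by rw [hcol (idx 0)]; ring
    rw [hA0, hB0] at h
    have hR0sum : (∑ i, (y i - Φ.mulVec (x 0) i)^2) = ∑ i, (y i)^2 := by
      apply Finset.sum_congr rfl; intro i _; rw [hR0 i]
    rw [hR0sum] at h
    have hsgg : Real.sign g0 * g0 = |g0| := aux_sign_mul g0
    have hsq : (Real.sign g0)^2 * g0^2 = g0^2 := by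
      have h' : (Real.sign g0 * g0)^2 = g0^2 := by rw [hsgg, sq_abs]
      linear_combination h'
    have habs2 : |g0|^2 = g0^2 := sq_abs g0
    have hβne : β ≠ 0 := ne_of_gt hβ
    calc ∑ i, (y i - Φ.mulVec (x 1) i)^2
        ≤ (∑ i, (y i)^2) - 2*(|g0|/β)*(β * |g0|) + (|g0|/β)^2 * ((Real.sign g0)^2 * β^2) := h
      _ = (∑ i, (y i)^2) - 2*g0^2 + (Real.sign g0)^2 * g0^2 := by
          have ht0β : |g0|/β*β = |g0| := div_mul_cancel₀ _ hβne
          have e1 : (|g0|/β)*(β*|g0|) = g0^2 := by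
            rw [show (|g0|/β)*(β*|g0|) = (|g0|/β*β)*|g0| from by ring, ht0β,
              abs_mul_abs_self, sq]
          have e2 : (|g0|/β)^2*((Real.sign g0)^2*β^2) = (Real.sign g0)^2*g0^2 := by
            rw [show (|g0|/β)^2*((Real.sign g0)^2*β^2)
                = (Real.sign g0)^2*((|g0|/β*β)*(|g0|/β*β)) from by ring, ht0β,
              abs_mul_abs_self]
            ring
          linarith [e1, e2]
      _ = (∑ i, (y i)^2) - g0^2 := by rw [hsq]; ring
  -- residual norms are nonincreasing
  have hmono : ∀ m : ℕ, ∑ i, (y i - Φ.mulVec (x (m+1)) i)^2 ≤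
      ∑ i, (y i - Φ.mulVec (x m) i)^2 := by
    intro m
    have h := hγmin m 0 ⟨le_refl 0, zero_le_one⟩
    rw [← hupd m] at h
    simpa using h
  have hchain : ∀ m : ℕ, ∑ i, (y i - Φ.mulVec (x (m+1)) i)^2 ≤
      ∑ i, (y i - Φ.mulVec (x 1) i)^2 := by
    intro m
    induction m with
    | zero => exact le_refl _
    | succ p ih => exact le_trans (hmono (p+1)) ih
  -- main argument
  intro k hγk
  set A : ℝ := ∑ i, Φ.mulVec (s k - x k) i * (y i - Φ.mulVec (x k) i) with hA
  set B : ℝ := ∑ i, (Φ.mulVec (s k - x k) i)^2 with hB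
  have hBpos : 0 < B := by
    obtain ⟨i0, hi0⟩ : ∃ i, Φ.mulVec (s k - x k) i ≠ 0 := by
      by_contra h
      push_neg at h
      exact hne k (funext h)
    apply Finset.sum_pos' (fun i _ => sq_nonneg _)
    exact ⟨i0, Finset.mem_univ _, lt_of_le_of_ne (sq_nonneg _) (Ne.symm (pow_ne_zero 2 hi0))⟩
  have hQ : ∀ t ∈ Set.Icc (0:ℝ) 1, (γ k)^2 * B - 2*(γ k)*A ≤ t^2*B - 2*t*A := by
    intro t ht
    have h := hγmin k t ht
    rw [hf k (γ k), hf k t] at h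
    linarith
  have hγpos : 0 < γ k := lt_of_le_of_ne (hγmem k).1 (Ne.symm hγk)
  have hApos : 0 < A := by
    have h := hQ 0 ⟨le_refl 0, zero_le_one⟩
    norm_num at h
    nlinarith [mul_pos hγpos hBpos]
  -- A ≤ B
  have hAB : A ≤ B := by
    cases k with
    | zero =>
      have hV0 : ∀ i, Φ.mulVec (s 0 - x 0) i = Real.sign g0 * β * Φ i (idx 0) := by
        intro i
        rw [hx0, sub_zero, hmv 0 i, hdp0]
      have hR0 : ∀ i, y i - Φ.mulVec (x 0) i = y i := by
        intro i; rw [hx0]; simp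
      have hA0 : A = β * |g0| := by
        rw [hA]
        calc (∑ i, Φ.mulVec (s 0 - x 0) i * (y i - Φ.mulVec (x 0) i))
            = ∑ i, Real.sign g0 * β * (Φ i (idx 0) * y i) := by
              apply Finset.sum_congr rfl; intro i _; rw [hV0 i, hR0 i]; ring
          _ = Real.sign g0 * β * g0 := by rw [← Finset.mul_sum, hg0]
          _ = β * (Real.sign g0 * g0) := by ring
          _ = β * |g0| := by rw [aux_sign_mul]
      have hB0 : B = (Real.sign g0)^2 * β^2 := by
        rw [hB]
        calc (∑ i, (Φ.mulVec (s 0 - x 0) i)^2)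
            = ∑ i, (Real.sign g0)^2 * β^2 * (Φ i (idx 0))^2 := by
              apply Finset.sum_congr rfl; intro i _; rw [hV0 i]; ring
          _ = (Real.sign g0)^2 * β^2 * ∑ i, (Φ i (idx 0))^2 := by rw [← Finset.mul_sum]
          _ = (Real.sign g0)^2 * β^2 := by rw [hcol (idx 0)]; ring
      rcases aux_sign_cases g0 with hσ | hσ | hσ
      · rw [hA0, hB0, hσ]
        nlinarith [abs_nonneg g0]
      · -- sign g0 = 0 → g0 = 0 → A = 0, contradicting hApos... also fine directly
        have hg00 : g0 = 0 := Real.sign_eq_zero_iff.mp hσ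
        rw [hA0, hB0, hσ, hg00]
        simp
      · rw [hA0, hB0, hσ]
        nlinarith [abs_nonneg g0]
    | succ K =>
      -- 2A ≤ B via ‖r_k‖² ≤ ‖y - Φ s_k‖²
      have hrk : ∑ i, (y i - Φ.mulVec (x (K+1)) i)^2 ≤ (∑ i, (y i)^2) - g0^2 :=
        le_trans (hchain K) h1bound
      -- vertex bound
      set σ : ℝ := Real.sign ((fun i => Φ i (idx (K+1))) ⬝ᵥ (y - Φ.mulVec (x (K+1)))) with hσdef
      have hUq : ∑ i, (y i - Φ.mulVec (s (K+1)) i)^2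
          = (∑ i, (y i)^2) - 2*(σ*β)*(∑ i, Φ i (idx (K+1)) * y i) + (σ*β)^2 := by
        calc ∑ i, (y i - Φ.mulVec (s (K+1)) i)^2
            = ∑ i, (y i - (σ*β) * Φ i (idx (K+1)))^2 := by
              apply Finset.sum_congr rfl; intro i _
              rw [hmv (K+1) i, ← hσdef]
          _ = (∑ i, (y i)^2) - 2*(σ*β)*(∑ i, Φ i (idx (K+1)) * y i)
                + (σ*β)^2 * (∑ i, (Φ i (idx (K+1)))^2) := aux_quad _ _ _
          _ = _ := by rw [hcol (idx (K+1))]; ring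
      have hsel0 : |∑ i, Φ i (idx (K+1)) * y i| ≤ |g0| := by
        have h := hsel 0 (idx (K+1))
        rw [hdp0] at h
        have harg : (fun i => Φ i (idx (K+1))) ⬝ᵥ (y - Φ.mulVec (x 0))
            = ∑ i, Φ i (idx (K+1)) * y i := by
          rw [hx0]; simp [dotProduct]
        rw [harg] at h
        exact h
      have hvert : (∑ i, (y i)^2) - g0^2 ≤ ∑ i, (y i - Φ.mulVec (s (K+1)) i)^2 := by
        rw [hUq]
        set h0 : ℝ := ∑ i, Φ i (idx (K+1)) * y i
        have h1 : h0 ≤ |g0| := le_trans (le_abs_self h0) hsel0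
        have h2 : -h0 ≤ |g0| := le_trans (neg_le_abs h0) hsel0
        rcases aux_sign_cases ((fun i => Φ i (idx (K+1))) ⬝ᵥ (y - Φ.mulVec (x (K+1))))
          with hσ | hσ | hσ <;> rw [← hσdef] at hσ <;> rw [hσ] <;>
          nlinarith [sq_abs g0, abs_nonneg g0, sq_nonneg (β - |g0|)]
      -- combine: ∑ r² ≤ ∑ (r - v)² = ∑ r² - 2A + B
      have hsplit : ∑ i, (y i - Φ.mulVec (s (K+1)) i)^2
          = (∑ i, (y i - Φ.mulVec (x (K+1)) i)^2) - 2*A + B := by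
        have e : ∀ i, y i - Φ.mulVec (s (K+1)) i
            = (y i - Φ.mulVec (x (K+1)) i) - 1 * (Φ.mulVec (s (K+1) - x (K+1)) i) := by
          intro i
          rw [Matrix.mulVec_sub]
          simp
        calc ∑ i, (y i - Φ.mulVec (s (K+1)) i)^2
            = ∑ i, ((y i - Φ.mulVec (x (K+1)) i)
                - 1 * (Φ.mulVec (s (K+1) - x (K+1)) i))^2 :=
              Finset.sum_congr rfl (fun i _ => by rw [e i])
          _ = (∑ i, (y i - Φ.mulVec (x (K+1)) i)^2)
                - 2*1*(∑ i, Φ.mulVec (s (K+1) - x (K+1)) i * (y i - Φ.mulVec (x (K+1)) i))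
                + 1^2 * (∑ i, (Φ.mulVec (s (K+1) - x (K+1)) i)^2) := aux_quad _ _ 1
          _ = _ := by rw [hA, hB]; ring
      have h2AB : 2*A ≤ B := by
        have := le_trans hrk (le_trans hvert (le_of_eq hsplit))
        linarith
      linarith
  -- finish: γ k = A / B
  have hmemAB : A/B ∈ Set.Icc (0:ℝ) 1 := by
    constructor
    · positivity
    · rw [div_le_one hBpos]; exact hAB
  have hkey := hQ (A/B) hmemAB
  have hBne : B ≠ 0 := ne_of_gt hBpos
  have hsqle : (γ k * B - A)^2 ≤ 0 := by
    have h1 : (A/B)^2*B - 2*(A/B)*A = -(A^2/B) := by field_simp; ring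
    rw [h1] at hkey
    have h2 : (γ k * B - A)^2 = B * ((γ k)^2 * B - 2*(γ k)*A + A^2/B) := by
      field_simp; ring
    rw [h2]
    have h3 : (γ k)^2 * B - 2*(γ k)*A + A^2/B ≤ 0 := by linarith
    exact mul_nonpos_of_nonneg_of_nonpos (le_of_lt hBpos) h3
  have hzero : γ k * B - A = 0 := by
    have h4 := le_antisymm hsqle (sq_nonneg _)
    exact sq_eq_zero_iff.mp h4
  have hγval : γ k = A / B := by
    field_simp
    linarith
  rw [hγval]
  have eA : A = Φ.mulVec (s k - x k) ⬝ᵥ (y - Φ.mulVec (x k)) := by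
    rw [hA]; simp [dotProduct]
  have eB : B = Φ.mulVec (s k - x k) ⬝ᵥ Φ.mulVec (s k - x k) := by
    rw [hB]; simp [dotProduct, sq]
  rw [eA, eB]
end

section
/- Assume m < (1/2)(1/μ + 1) and y = Φx* is m-sparse. Then every Frank–Wolfe iterate satisfies the uniform bound ‖x_k‖₁ ≤ 2‖y‖₂ √(m/(1 − μ₁(m−1))). -/
open Matrix BigOperators Finset Filter

namespace Stmt17

variable {d n : ℕ}

/-- Gram entry -/
noncomputable def G (Φ : Matrix (Fin d) (Fin n) ℝ) (j l : Fin n) : ℝ :=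
  (fun i => Φ i j) ⬝ᵥ (fun i => Φ i l)

lemma G_symm (Φ : Matrix (Fin d) (Fin n) ℝ) (j l : Fin n) : G Φ j l = G Φ l j := by
  unfold G dotProduct; exact Finset.sum_congr rfl fun i _ => mul_comm _ _

lemma G_diag (Φ : Matrix (Fin d) (Fin n) ℝ) (hunit : ∀ j, ∑ i, Φ i j ^ 2 = 1) (j : Fin n) :
    G Φ j j = 1 := by
  unfold G dotProduct; rw [← hunit j]; exact Finset.sum_congr rfl fun i _ => (sq _).symm

lemma dot_mulVec (Φ : Matrix (Fin d) (Fin n) ℝ) (j : Fin n) (w : Fin n → ℝ) :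
    (fun i => Φ i j) ⬝ᵥ Φ.mulVec w = ∑ l, G Φ j l * w l := by
  unfold G dotProduct Matrix.mulVec dotProduct
  simp only [Finset.mul_sum, Finset.sum_mul]
  rw [Finset.sum_comm]
  exact Finset.sum_congr rfl fun l _ => Finset.sum_congr rfl fun i _ => by ring

lemma coh_bddAbove (Φ : Matrix (Fin d) (Fin n) ℝ) :
    BddAbove {x | ∃ j k : Fin n, j ≠ k ∧ x = |(fun i => Φ i j) ⬝ᵥ (fun i => Φ i k)|} := by
  apply Set.Finite.bddAbove
  apply Set.Finite.subset (Set.finite_range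
    (fun p : Fin n × Fin n => |(fun i => Φ i p.1) ⬝ᵥ (fun i => Φ i p.2)|))
  rintro x ⟨j, k, _, rfl⟩
  exact ⟨(j, k), rfl⟩

lemma abs_G_le_coh (Φ : Matrix (Fin d) (Fin n) ℝ) {j k : Fin n} (h : j ≠ k) :
    |G Φ j k| ≤ coh Φ :=
  le_csSup (coh_bddAbove Φ) ⟨j, k, h, rfl⟩

lemma coh_nonneg (Φ : Matrix (Fin d) (Fin n) ℝ) : 0 ≤ coh Φ := by
  rcases Set.eq_empty_or_nonempty
    {x | ∃ j k : Fin n, j ≠ k ∧ x = |(fun i => Φ i j) ⬝ᵥ (fun i => Φ i k)|} with h | ⟨x, j, k, hjk, rfl⟩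
  · unfold coh; rw [h, Real.sSup_empty]
  · exact le_trans (abs_nonneg _) (abs_G_le_coh Φ hjk)

lemma babel_bddAbove (Φ : Matrix (Fin d) (Fin n) ℝ) (m : ℕ) :
    BddAbove {x | ∃ (Λ : Finset (Fin n)) (i : Fin n), Λ.card = m ∧ i ∉ Λ ∧
      x = ∑ j ∈ Λ, |(fun a => Φ a i) ⬝ᵥ (fun a => Φ a j)|} := by
  apply Set.Finite.bddAbove
  apply Set.Finite.subset (Set.finite_range
    (fun p : Finset (Fin n) × Fin n => ∑ j ∈ p.1, |(fun a => Φ a p.2) ⬝ᵥ (fun a => Φ a j)|))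
  rintro x ⟨Λ, i, _, _, rfl⟩
  exact ⟨(Λ, i), rfl⟩

lemma rowsum_le_babel (Φ : Matrix (Fin d) (Fin n) ℝ) {m : ℕ} {Λ : Finset (Fin n)} {i : Fin n}
    (hc : Λ.card = m) (hi : i ∉ Λ) :
    ∑ j ∈ Λ, |G Φ i j| ≤ babel Φ m :=
  le_csSup (babel_bddAbove Φ m) ⟨Λ, i, hc, hi, rfl⟩

lemma babel_le (Φ : Matrix (Fin d) (Fin n) ℝ) (m : ℕ) :
    babel Φ m ≤ (m : ℝ) * coh Φ := by
  apply Real.sSup_le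
  · rintro x ⟨Λ, i, hc, hi, rfl⟩
    calc ∑ j ∈ Λ, |(fun a => Φ a i) ⬝ᵥ (fun a => Φ a j)| ≤ ∑ j ∈ Λ, coh Φ :=
          Finset.sum_le_sum fun j hj => abs_G_le_coh Φ (fun h => hi (h ▸ hj))
      _ = (m : ℝ) * coh Φ := by rw [Finset.sum_const, hc, nsmul_eq_mul]
  · exact mul_nonneg (Nat.cast_nonneg m) (coh_nonneg Φ)

lemma babel_of_le (Φ : Matrix (Fin d) (Fin n) ℝ) {m : ℕ} (h : n ≤ m) : babel Φ m = 0 := by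
  have : {x | ∃ (Λ : Finset (Fin n)) (i : Fin n), Λ.card = m ∧ i ∉ Λ ∧
      x = ∑ j ∈ Λ, |(fun a => Φ a i) ⬝ᵥ (fun a => Φ a j)|} = ∅ := by
    ext x
    simp only [Set.mem_setOf_eq, Set.mem_empty_iff_false, iff_false, not_exists]
    rintro Λ i ⟨hc, hi, _⟩
    have h1 : Λ ⊆ Finset.univ.erase i := fun a ha =>
      Finset.mem_erase.mpr ⟨fun he => hi (he ▸ ha), Finset.mem_univ a⟩
    have h2 := Finset.card_le_card h1
    rw [Finset.card_erase_of_mem (Finset.mem_univ i), Finset.card_univ, Fintype.card_fin] at h2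
    have h3 : 0 < n := i.pos
    omega
  unfold babel; rw [this, Real.sSup_empty]

/-- Cauchy–Schwarz, sqrt form. -/
lemma cs_sqrt (f g : Fin d → ℝ) :
    ∑ i, f i * g i ≤ Real.sqrt (∑ i, f i ^ 2) * Real.sqrt (∑ i, g i ^ 2) := by
  have h := Finset.sum_mul_sq_le_sq_mul_sq Finset.univ f g
  calc ∑ i, f i * g i ≤ |∑ i, f i * g i| := le_abs_self _
    _ = Real.sqrt ((∑ i, f i * g i) ^ 2) := (Real.sqrt_sq_eq_abs _).symm
    _ ≤ Real.sqrt ((∑ i, f i ^ 2) * ∑ i, g i ^ 2) := Real.sqrt_le_sqrt h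
    _ = _ := Real.sqrt_mul (by positivity) _

/-- ℓ² triangle-type bound:  ∑ (a−b)² ≤ (‖a‖+‖b‖)². -/
lemma minkow (a b : Fin d → ℝ) :
    ∑ i, (a i - b i) ^ 2 ≤ (Real.sqrt (∑ i, a i ^ 2) + Real.sqrt (∑ i, b i ^ 2)) ^ 2 := by
  have hcs : ∑ i, a i * (-b i) ≤ Real.sqrt (∑ i, a i ^ 2) * Real.sqrt (∑ i, b i ^ 2) := by
    have := cs_sqrt a (fun i => -b i)
    simpa [neg_sq] using this
  have ha : Real.sqrt (∑ i, a i ^ 2) ^ 2 = ∑ i, a i ^ 2 := Real.sq_sqrt (by positivity)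
  have hb : Real.sqrt (∑ i, b i ^ 2) ^ 2 = ∑ i, b i ^ 2 := Real.sq_sqrt (by positivity)
  have hcs' : -(∑ i, a i * b i) ≤ Real.sqrt (∑ i, a i ^ 2) * Real.sqrt (∑ i, b i ^ 2) := by
    rw [← Finset.sum_neg_distrib]
    calc ∑ i, -(a i * b i) = ∑ i, a i * -b i := Finset.sum_congr rfl fun i _ => by ring
      _ ≤ _ := hcs
  have hexp : ∑ i, (a i - b i) ^ 2 = ∑ i, a i ^ 2 - 2 * ∑ i, a i * b i + ∑ i, b i ^ 2 := by
    rw [Finset.mul_sum, ← Finset.sum_sub_distrib, ← Finset.sum_add_distrib]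
    exact Finset.sum_congr rfl fun i _ => by ring
  nlinarith [hcs', ha, hb]

/-- Gershgorin-type quadratic form lower bound. -/
lemma quad_lower (Φ : Matrix (Fin d) (Fin n) ℝ) (hunit : ∀ j, ∑ i, Φ i j ^ 2 = 1)
    (S : Finset (Fin n)) (x : Fin n → ℝ) (hx : ∀ j ∉ S, x j = 0) (B : ℝ)
    (hB : ∀ i ∈ S, ∑ j ∈ S.erase i, |G Φ i j| ≤ B) :
    (1 - B) * ∑ j, x j ^ 2 ≤ ∑ i, Φ.mulVec x i ^ 2 := by
  have hmv : ∀ i, Φ.mulVec x i = ∑ j ∈ S, Φ i j * x j := by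
    intro i
    rw [Matrix.mulVec, dotProduct]
    exact (Finset.sum_subset (Finset.subset_univ S)
      (fun j _ hj => by rw [hx j hj, mul_zero])).symm
  have hexp : ∑ i, Φ.mulVec x i ^ 2 = ∑ j ∈ S, ∑ l ∈ S, x j * x l * G Φ j l := by
    simp only [hmv, sq, Finset.sum_mul_sum]
    rw [Finset.sum_comm]
    refine Finset.sum_congr rfl fun j _ => ?_
    rw [Finset.sum_comm]
    refine Finset.sum_congr rfl fun l _ => ?_
    unfold G dotProduct
    rw [Finset.mul_sum]
    exact Finset.sum_congr rfl fun i _ => by ring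
  have hsq : ∑ j, x j ^ 2 = ∑ j ∈ S, x j ^ 2 :=
    (Finset.sum_subset (Finset.subset_univ S) (fun j _ hj => by rw [hx j hj]; ring)).symm
  rw [hexp, hsq]
  -- split diagonal
  have hsplit : ∀ j ∈ S, ∑ l ∈ S, x j * x l * G Φ j l
      = x j ^ 2 + ∑ l ∈ S.erase j, x j * x l * G Φ j l := by
    intro j hj
    rw [← Finset.add_sum_erase S _ hj, G_diag Φ hunit]; ring_nf
  rw [Finset.sum_congr rfl hsplit, Finset.sum_add_distrib]
  have key : -(B * ∑ j ∈ S, x j ^ 2) ≤ ∑ j ∈ S, ∑ l ∈ S.erase j, x j * x l * G Φ j l := by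
    have h1 : ∀ j ∈ S, ∀ l ∈ S.erase j,
        -(|G Φ j l| * (x j ^ 2 / 2) + |G Φ j l| * (x l ^ 2 / 2)) ≤ x j * x l * G Φ j l := by
      intro j _ l _
      have h2 : |x j * x l * G Φ j l| ≤ |G Φ j l| * (x j ^ 2 / 2) + |G Φ j l| * (x l ^ 2 / 2) := by
        rw [abs_mul, abs_mul]
        nlinarith [abs_nonneg (G Φ j l), abs_nonneg (x j), abs_nonneg (x l),
          sq_abs (x j), sq_abs (x l), sq_nonneg (|x j| - |x l|),
          mul_nonneg (abs_nonneg (x j)) (abs_nonneg (x l))]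
      linarith [neg_abs_le (x j * x l * G Φ j l)]
    calc -(B * ∑ j ∈ S, x j ^ 2)
        ≤ -(∑ j ∈ S, ∑ l ∈ S.erase j, (|G Φ j l| * (x j ^ 2 / 2) + |G Φ j l| * (x l ^ 2 / 2))) := by
          apply neg_le_neg
          rw [show B * ∑ j ∈ S, x j ^ 2 = ∑ j ∈ S, B * x j ^ 2 from Finset.mul_sum _ _ _]
          have hA : ∑ j ∈ S, ∑ l ∈ S.erase j, |G Φ j l| * (x j ^ 2 / 2)
              ≤ ∑ j ∈ S, B * (x j ^ 2 / 2) := by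
            apply Finset.sum_le_sum
            intro j hj
            rw [← Finset.sum_mul]
            exact mul_le_mul_of_nonneg_right (hB j hj) (by positivity)
          have hswap : ∑ j ∈ S, ∑ l ∈ S.erase j, |G Φ j l| * (x l ^ 2 / 2)
              = ∑ l ∈ S, ∑ j ∈ S.erase l, |G Φ j l| * (x l ^ 2 / 2) := by
            have h1 : ∀ j ∈ S, ∑ l ∈ S.erase j, |G Φ j l| * (x l ^ 2 / 2)
                = (∑ l ∈ S, |G Φ j l| * (x l ^ 2 / 2)) - |G Φ j j| * (x j ^ 2 / 2) :=
              fun j hj => Finset.sum_erase_eq_sub hj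
            have h2 : ∀ l ∈ S, ∑ j ∈ S.erase l, |G Φ j l| * (x l ^ 2 / 2)
                = (∑ j ∈ S, |G Φ j l| * (x l ^ 2 / 2)) - |G Φ l l| * (x l ^ 2 / 2) :=
              fun l hl => Finset.sum_erase_eq_sub hl
            rw [Finset.sum_congr rfl h1, Finset.sum_congr rfl h2, Finset.sum_sub_distrib,
              Finset.sum_sub_distrib, Finset.sum_comm]
          have hBpart : ∑ l ∈ S, ∑ j ∈ S.erase l, |G Φ j l| * (x l ^ 2 / 2)
              ≤ ∑ l ∈ S, B * (x l ^ 2 / 2) := by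
            apply Finset.sum_le_sum
            intro l hl
            rw [← Finset.sum_mul]
            apply mul_le_mul_of_nonneg_right _ (by positivity)
            calc ∑ j ∈ S.erase l, |G Φ j l| = ∑ j ∈ S.erase l, |G Φ l j| :=
                  Finset.sum_congr rfl fun j _ => by rw [G_symm]
              _ ≤ B := hB l hl
          calc ∑ j ∈ S, ∑ l ∈ S.erase j,
                (|G Φ j l| * (x j ^ 2 / 2) + |G Φ j l| * (x l ^ 2 / 2))
              = (∑ j ∈ S, ∑ l ∈ S.erase j, |G Φ j l| * (x j ^ 2 / 2))
                + ∑ j ∈ S, ∑ l ∈ S.erase j, |G Φ j l| * (x l ^ 2 / 2) := by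
                rw [← Finset.sum_add_distrib]
                exact Finset.sum_congr rfl fun j _ => Finset.sum_add_distrib
            _ ≤ (∑ j ∈ S, B * (x j ^ 2 / 2)) + ∑ l ∈ S, B * (x l ^ 2 / 2) := by
                refine add_le_add hA ?_; rw [hswap]; exact hBpart
            _ = ∑ j ∈ S, B * x j ^ 2 := by
                rw [← Finset.sum_add_distrib]
                exact Finset.sum_congr rfl fun j _ => by ring
      _ ≤ ∑ j ∈ S, ∑ l ∈ S.erase j, x j * x l * G Φ j l := by
          rw [← Finset.sum_neg_distrib]
          apply Finset.sum_le_sum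
          intro j hj
          rw [← Finset.sum_neg_distrib]
          exact Finset.sum_le_sum (h1 j hj)
  linarith

end Stmt17


set_option maxHeartbeats 4000000

/-- Uniform ℓ¹ bound on Frank–Wolfe iterates:
‖x_k‖₁ ≤ 2‖y‖₂ √(m/(1 − μ₁(m−1))). -/
theorem stmt17 {d n : ℕ} (Φ : Matrix (Fin d) (Fin n) ℝ)
    (hunit : ∀ j, l2norm (fun i => Φ i j) = 1)
(m : ℕ) (xstar : Fin n → ℝ) (Λopt : Finset (Fin n))
    (hsupp : ∀ j, xstar j ≠ 0 ↔ j ∈ Λopt) (hcard : Λopt.card ≤ m)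
    (hm : (m : ℝ) < (1/2) * (1 / coh Φ + 1))
    (β : ℝ) (hβ : 0 < β)
    (y : Fin d → ℝ) (hy : y = Φ.mulVec xstar)
    (x s : ℕ → Fin n → ℝ) (idx : ℕ → Fin n) (γ : ℕ → ℝ)
    (hx0 : x 0 = 0)
    (hsel : ∀ k j, |(fun i => Φ i j) ⬝ᵥ (y - Φ.mulVec (x k))| ≤
      |(fun i => Φ i (idx k)) ⬝ᵥ (y - Φ.mulVec (x k))|)
    (hs : ∀ k, s k = fun j => if j = idx k then
      Real.sign ((fun i => Φ i (idx k)) ⬝ᵥ (y - Φ.mulVec (x k))) * β else 0)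
    (hγmem : ∀ k, γ k ∈ Set.Icc (0 : ℝ) 1)
    (hγmin : ∀ k, ∀ γ' ∈ Set.Icc (0 : ℝ) 1,
      ∑ i, (y i - Φ.mulVec (x k + γ k • (s k - x k)) i) ^ 2 ≤
        ∑ i, (y i - Φ.mulVec (x k + γ' • (s k - x k)) i) ^ 2)
    (hupd : ∀ k, x (k + 1) = x k + γ k • (s k - x k)) :
    ∀ k, l1norm (x k) ≤ 2 * l2norm y * Real.sqrt ((m : ℝ) / (1 - babel Φ (m - 1))) := by
  classical
  have hcoh0 : (0:ℝ) ≤ coh Φ := Stmt17.coh_nonneg Φ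
  have hunit' : ∀ j, ∑ i, Φ i j ^ 2 = 1 := by
    intro j; have h := hunit j; unfold l2norm at h; exact Real.sqrt_eq_one.mp h
  have hRHSnn : 0 ≤ 2 * l2norm y * Real.sqrt ((m:ℝ) / (1 - babel Φ (m-1))) := by
    unfold l2norm; positivity
  have hl1nn : ∀ z : Fin n → ℝ, 0 ≤ l1norm z := fun z => by
    unfold l1norm; positivity
  have hres : ∀ k, y - Φ.mulVec (x k) = Φ.mulVec (xstar - x k) := by
    intro k; rw [Matrix.mulVec_sub, ← hy]
  -- residual energy
  set Y2 : ℝ := ∑ i, y i ^ 2 with hY2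
  set Fq : ℕ → ℝ := fun k => ∑ i, (y i - Φ.mulVec (x k) i) ^ 2 with hFq
  have hFnn : ∀ k, 0 ≤ Fq k := fun k => by rw [hFq]; positivity
  have hY2nn : (0:ℝ) ≤ Y2 := by rw [hY2]; positivity
  have hF0 : Fq 0 = Y2 := by
    rw [hFq, hY2]; simp [hx0, Matrix.mulVec_zero]
  have hFstep : ∀ k, Fq (k+1) ≤ Fq k := by
    intro k
    have h := hγmin k 0 ⟨le_refl 0, zero_le_one⟩
    simp only [zero_smul, add_zero] at h
    rw [hFq]; simp only [hupd k]; exact h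
  have hFmon : ∀ k, Fq k ≤ Y2 := by
    intro k
    induction k with
    | zero => exact le_of_eq hF0
    | succ k ih => exact le_trans (hFstep k) ih
  have hl2y : l2norm y = Real.sqrt Y2 := by rw [hY2]; rfl
  -- the inner product expansion
  have hip : ∀ k (w : Fin n → ℝ), ∑ i, (y i - Φ.mulVec (x k) i) * Φ.mulVec w i
      = ∑ j, w j * ((fun i => Φ i j) ⬝ᵥ (y - Φ.mulVec (x k))) := by
    intro k w
    simp only [Matrix.mulVec, dotProduct, Pi.sub_apply, Finset.mul_sum, Finset.sum_mul]
    rw [Finset.sum_comm]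
    refine Finset.sum_congr rfl fun j _ => Finset.sum_congr rfl fun i _ => ?_
    ring
  rcases Nat.eq_zero_or_pos m with hm0 | hmpos
  · -- m = 0 : everything vanishes
    have hΛ : Λopt = ∅ := Finset.card_eq_zero.mp (le_antisymm (hm0 ▸ hcard) (Nat.zero_le _))
    have hxs : xstar = 0 := by
      funext j
      by_contra h
      have := (hsupp j).mp h
      rw [hΛ] at this
      exact absurd this (Finset.notMem_empty j)
    have hy0 : y = 0 := by rw [hy, hxs, Matrix.mulVec_zero]
    have hzero : ∀ k, x k = 0 := by
      intro k
      induction k with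
      | zero => exact hx0
      | succ k ih =>
        have hr0 : y - Φ.mulVec (x k) = 0 := by
          rw [ih, hy0, Matrix.mulVec_zero, sub_zero]
        have hs0 : s k = 0 := by
          rw [hs k]; funext j
          by_cases hj : j = idx k
          · simp [hj, hr0, dotProduct_zero, Real.sign_zero]
          · simp [hj]
        rw [hupd k, ih, hs0]; simp
    intro k
    have : l1norm (x k) = 0 := by rw [hzero k]; unfold l1norm; simp
    rw [this]; exact hRHSnn
  · -- m ≥ 1
    have hm1R : (1:ℝ) ≤ (m:ℝ) := by exact_mod_cast hmpos
    have hcohpos : 0 < coh Φ := by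
      rcases lt_or_eq_of_le hcoh0 with h | h
      · exact h
      · exfalso; rw [← h] at hm; simp at hm; linarith
    have hkey : coh Φ * (2*(m:ℝ) - 1) < 1 := by
      have h2 : 2*(m:ℝ) - 1 < 1 / coh Φ := by linarith
      have h3 := (lt_div_iff₀ hcohpos).mp h2
      linarith [h3]
    by_cases hmn : m ≤ n
    · -- CASE A : m ≤ n
      -- support induction
      have hsuppx : ∀ k, ∀ j, j ∉ Λopt → x k j = 0 := by
        intro k
        induction k with
        | zero => intro j _; rw [hx0]; rfl
        | succ k ih =>
          by_cases hv : xstar - x k = 0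
          · have hr0 : y - Φ.mulVec (x k) = 0 := by
              rw [hres k, hv, Matrix.mulVec_zero]
            have hs0 : s k = 0 := by
              rw [hs k]; funext j
              by_cases hj : j = idx k
              · simp [hj, hr0, dotProduct_zero, Real.sign_zero]
              · simp [hj]
            intro j hj
            rw [hupd k, hs0]
            simp [ih j hj]
          · -- recovery step
            obtain ⟨j0, hj0⟩ : ∃ j0, xstar j0 - x k j0 ≠ 0 := by
              by_contra h; push_neg at h
              exact hv (funext fun j => by simpa [Pi.sub_apply] using h j)
            have hj0mem : j0 ∈ Λopt := by
              by_contra hmem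
              have h1 : xstar j0 = 0 := by
                by_contra h2; exact hmem ((hsupp j0).mp h2)
              exact hj0 (by rw [h1, ih j0 hmem, sub_zero])
            set v : Fin n → ℝ := fun j => xstar j - x k j with hvdef
            obtain ⟨js, hjs, hmax⟩ := Λopt.exists_max_image (fun j => |v j|) ⟨j0, hj0mem⟩
            set M := |v js| with hM
            have hMpos : 0 < M := lt_of_lt_of_le (abs_pos.mpr hj0) (hmax j0 hj0mem)
            have hvout : ∀ l, l ∉ Λopt → v l = 0 := by
              intro l hl
              have h1 : xstar l = 0 := by
                by_contra h2; exact hl ((hsupp l).mp h2)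
              rw [hvdef]; simp [h1, ih l hl]
            have hvle : ∀ l, |v l| ≤ M := by
              intro l
              by_cases hl : l ∈ Λopt
              · exact hmax l hl
              · rw [hvout l hl, abs_zero]; exact hMpos.le
            have hcval : ∀ j, (fun i => Φ i j) ⬝ᵥ (y - Φ.mulVec (x k))
                = ∑ l, Stmt17.G Φ j l * v l := by
              intro j
              have hxv : xstar - x k = v := by funext l; rfl
              rw [hres k, hxv, Stmt17.dot_mulVec]
            have hcΛ : (Λopt.card : ℝ) ≤ (m:ℝ) := Nat.cast_le.mpr hcard
            -- off-support upper bound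
            have hub : ∀ i, i ∉ Λopt →
                |(fun a => Φ a i) ⬝ᵥ (y - Φ.mulVec (x k))| ≤ M * ((m:ℝ) * coh Φ) := by
              intro i hi
              rw [hcval i]
              have h1 : ∑ l, Stmt17.G Φ i l * v l = ∑ l ∈ Λopt, Stmt17.G Φ i l * v l :=
                (Finset.sum_subset (Finset.subset_univ _)
                  (fun l _ hl => by rw [hvout l hl, mul_zero])).symm
              rw [h1]
              calc |∑ l ∈ Λopt, Stmt17.G Φ i l * v l|
                  ≤ ∑ l ∈ Λopt, |Stmt17.G Φ i l * v l| := Finset.abs_sum_le_sum_abs _ _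
                _ ≤ ∑ _l ∈ Λopt, coh Φ * M := by
                    apply Finset.sum_le_sum; intro l hl
                    rw [abs_mul]
                    exact mul_le_mul (Stmt17.abs_G_le_coh Φ (fun h => hi (h ▸ hl)))
                      (hvle l) (abs_nonneg _) hcoh0
                _ = (Λopt.card : ℝ) * (coh Φ * M) := by
                    rw [Finset.sum_const, nsmul_eq_mul]
                _ ≤ (m:ℝ) * (coh Φ * M) := by
                    apply mul_le_mul_of_nonneg_right hcΛ (by positivity)
                _ = M * ((m:ℝ) * coh Φ) := by ring
            -- on-support lower bound at js
            have hlb : M * (1 - ((m:ℝ) - 1) * coh Φ)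
                ≤ |(fun a => Φ a js) ⬝ᵥ (y - Φ.mulVec (x k))| := by
              rw [hcval js]
              have hsplit : ∑ l, Stmt17.G Φ js l * v l
                  = v js + ∑ l ∈ Finset.univ.erase js, Stmt17.G Φ js l * v l := by
                rw [← Finset.add_sum_erase _ _ (Finset.mem_univ js),
                  Stmt17.G_diag Φ hunit', one_mul]
              have herr : |∑ l ∈ Finset.univ.erase js, Stmt17.G Φ js l * v l|
                  ≤ (((m:ℝ) - 1) * coh Φ) * M := by
                have h1 : ∑ l ∈ Finset.univ.erase js, Stmt17.G Φ js l * v l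
                    = ∑ l ∈ Λopt.erase js, Stmt17.G Φ js l * v l := by
                  symm
                  apply Finset.sum_subset (Finset.erase_subset_erase _ (Finset.subset_univ _))
                  intro l hl hlm
                  have hnot : l ∉ Λopt := fun hin =>
                    hlm (Finset.mem_erase.mpr ⟨(Finset.mem_erase.mp hl).1, hin⟩)
                  rw [hvout l hnot, mul_zero]
                have hcerase : ((Λopt.erase js).card : ℝ) ≤ (m:ℝ) - 1 := by
                  rw [Finset.card_erase_of_mem hjs]
                  have h2 : (1:ℕ) ≤ Λopt.card := Finset.card_pos.mpr ⟨js, hjs⟩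
                  rw [Nat.cast_sub h2, Nat.cast_one]
                  have h6 : (Λopt.card:ℝ) ≤ (m:ℝ) := Nat.cast_le.mpr hcard
                  linarith
                rw [h1]
                calc |∑ l ∈ Λopt.erase js, Stmt17.G Φ js l * v l|
                    ≤ ∑ l ∈ Λopt.erase js, |Stmt17.G Φ js l * v l| :=
                      Finset.abs_sum_le_sum_abs _ _
                  _ ≤ ∑ _l ∈ Λopt.erase js, coh Φ * M := by
                      apply Finset.sum_le_sum; intro l hl
                      rw [abs_mul]
                      exact mul_le_mul
                        (Stmt17.abs_G_le_coh Φ (fun h => (Finset.mem_erase.mp hl).1 h.symm))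
                        (hvle l) (abs_nonneg _) hcoh0
                  _ = ((Λopt.erase js).card : ℝ) * (coh Φ * M) := by
                      rw [Finset.sum_const, nsmul_eq_mul]
                  _ ≤ (((m:ℝ) - 1) * coh Φ) * M := by
                      rw [mul_assoc]
                      exact mul_le_mul_of_nonneg_right hcerase (by positivity)
              have htri : M - (((m:ℝ)-1) * coh Φ) * M
                  ≤ |v js + ∑ l ∈ Finset.univ.erase js, Stmt17.G Φ js l * v l| := by
                have h2 := abs_add_le (v js + ∑ l ∈ Finset.univ.erase js, Stmt17.G Φ js l * v l)
                  (-(∑ l ∈ Finset.univ.erase js, Stmt17.G Φ js l * v l))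
                simp only [add_neg_cancel_right, abs_neg] at h2
                rw [hM]
                linarith [herr]
              rw [hsplit]
              calc M * (1 - ((m:ℝ)-1) * coh Φ) = M - (((m:ℝ)-1) * coh Φ) * M := by ring
                _ ≤ _ := htri
            -- conclude idx k ∈ Λopt
            have hidx : idx k ∈ Λopt := by
              by_contra hnot
              have h1 := hsel k js
              have h2 := hub (idx k) hnot
              have h3 := hlb
              have h4 : 0 < M * (1 - coh Φ * (2*(m:ℝ)-1)) := mul_pos hMpos (by linarith)
              nlinarith [h1, h2, h3, h4]
            intro j hj
            have hne : j ≠ idx k := fun h => hj (h ▸ hidx)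
            rw [hupd k]
            have hsj : s k j = 0 := by rw [hs k]; simp [hne]
            simp [hsj, ih j hj]
      -- static bound
      have hBle : babel Φ (m-1) ≤ ((m:ℝ)-1) * coh Φ := by
        have h := Stmt17.babel_le Φ (m-1)
        rwa [Nat.cast_sub hmpos, Nat.cast_one] at h
      have hB1 : babel Φ (m-1) < 1 := by
        have h5 : ((m:ℝ)-1) * coh Φ < 1 := by
          nlinarith [mul_nonneg (Nat.cast_nonneg m : (0:ℝ) ≤ (m:ℝ)) hcoh0]
        linarith
      have h1B : 0 < 1 - babel Φ (m-1) := by linarith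
      have hrows : ∀ i ∈ Λopt, ∑ j ∈ Λopt.erase i, |Stmt17.G Φ i j| ≤ babel Φ (m-1) := by
        intro i hi
        have hBsub : Λopt.erase i ⊆ Finset.univ.erase i :=
          Finset.erase_subset_erase _ (Finset.subset_univ _)
        have hc1 : (Λopt.erase i).card = Λopt.card - 1 := Finset.card_erase_of_mem hi
        have hc2 : (Finset.univ.erase i).card = n - 1 := by
          rw [Finset.card_erase_of_mem (Finset.mem_univ i), Finset.card_univ, Fintype.card_fin]
        have hcpos : 1 ≤ Λopt.card := Finset.card_pos.mpr ⟨i, hi⟩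
        obtain ⟨C, hC1, hC2, hC3⟩ := Finset.exists_subsuperset_card_eq
          (n := (m-1) - (Λopt.erase i).card + (Λopt.erase i).card) hBsub (by omega) (by omega)
        have hC3' : C.card = m - 1 := by omega
        have hiC : i ∉ C := fun h => (Finset.mem_erase.mp (hC2 h)).1 rfl
        calc ∑ j ∈ Λopt.erase i, |Stmt17.G Φ i j| ≤ ∑ j ∈ C, |Stmt17.G Φ i j| :=
            Finset.sum_le_sum_of_subset_of_nonneg hC1 (fun _ _ _ => abs_nonneg _)
          _ ≤ babel Φ (m-1) := Stmt17.rowsum_le_babel Φ hC3' hiC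
      intro k
      have hquad := Stmt17.quad_lower Φ hunit' Λopt (x k) (hsuppx k) _ hrows
      have hcs : (l1norm (x k))^2 ≤ (m : ℝ) * ∑ j, x k j ^ 2 := by
        have hT : l1norm (x k) = ∑ j ∈ Λopt, |x k j| := by
          unfold l1norm
          exact (Finset.sum_subset (Finset.subset_univ _)
            (fun j _ hj => by rw [hsuppx k j hj, abs_zero])).symm
        rw [hT]
        calc (∑ j ∈ Λopt, |x k j|)^2 ≤ (Λopt.card : ℝ) * ∑ j ∈ Λopt, |x k j|^2 := by
              exact sq_sum_le_card_mul_sum_sq (s := Λopt) (f := fun j => |x k j|)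
          _ = (Λopt.card : ℝ) * ∑ j ∈ Λopt, x k j ^2 := by simp [sq_abs]
          _ ≤ (m : ℝ) * ∑ j, x k j ^ 2 := by
              apply mul_le_mul (Nat.cast_le.mpr hcard)
                (Finset.sum_le_sum_of_subset_of_nonneg (Finset.subset_univ _)
                  (fun _ _ _ => sq_nonneg _))
                (Finset.sum_nonneg fun _ _ => sq_nonneg _) (Nat.cast_nonneg m)
      -- ‖Φ x_k‖² ≤ 4 Y2
      have hmink : ∑ i, Φ.mulVec (x k) i ^ 2 ≤ 4 * Y2 := by
        have h := Stmt17.minkow y (fun i => y i - Φ.mulVec (x k) i)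
        have h1 : ∑ i, (y i - (y i - Φ.mulVec (x k) i))^2 = ∑ i, Φ.mulVec (x k) i ^2 := by
          exact Finset.sum_congr rfl fun i _ => by ring_nf
        rw [h1] at h
        have h2 : Real.sqrt (∑ i, (y i - Φ.mulVec (x k) i)^2) ≤ Real.sqrt Y2 :=
          Real.sqrt_le_sqrt (hFmon k)
        have h3 : Real.sqrt (∑ i, y i ^2) = Real.sqrt Y2 := by rw [hY2]
        have h4 : Real.sqrt Y2 ^ 2 = Y2 := Real.sq_sqrt hY2nn
        nlinarith [Real.sqrt_nonneg Y2, Real.sqrt_nonneg (∑ i, (y i - Φ.mulVec (x k) i)^2), h]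
      -- combine
      have hfinal : (l1norm (x k))^2 ≤ 4*Y2 * ((m:ℝ) / (1 - babel Φ (m-1))) := by
        have h5 : (1 - babel Φ (m-1)) * ∑ j, x k j ^2 ≤ 4 * Y2 := le_trans hquad hmink
        have h6 : ∑ j, x k j ^2 ≤ 4*Y2 / (1 - babel Φ (m-1)) := by
          rw [le_div_iff₀ h1B]; linarith
        calc (l1norm (x k))^2 ≤ (m : ℝ) * ∑ j, x k j ^ 2 := hcs
          _ ≤ (m:ℝ) * (4*Y2 / (1 - babel Φ (m-1))) :=
              mul_le_mul_of_nonneg_left h6 (Nat.cast_nonneg m)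
          _ = 4*Y2 * ((m:ℝ) / (1 - babel Φ (m-1))) := by ring
      calc l1norm (x k) = Real.sqrt ((l1norm (x k))^2) := (Real.sqrt_sq (hl1nn _)).symm
        _ ≤ Real.sqrt (4*Y2 * ((m:ℝ) / (1 - babel Φ (m-1)))) := Real.sqrt_le_sqrt hfinal
        _ = Real.sqrt (4*Y2) * Real.sqrt ((m:ℝ) / (1 - babel Φ (m-1))) :=
            Real.sqrt_mul (by positivity) _
        _ = 2 * l2norm y * Real.sqrt ((m:ℝ) / (1 - babel Φ (m-1))) := by
            rw [hl2y, show (4:ℝ)*Y2 = (2:ℝ)^2 * Y2 by norm_num,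
              Real.sqrt_mul (by positivity), Real.sqrt_sq (by norm_num : (0:ℝ) ≤ 2)]
    · -- CASE B : n < m
      have hB0 : babel Φ (m-1) = 0 := Stmt17.babel_of_le Φ (by omega)
      rcases Nat.eq_zero_or_pos n with hn0 | hnpos
      · intro k
        have hz : l1norm (x k) = 0 := by
          unfold l1norm
          subst hn0
          simp
        rw [hz]; exact hRHSnn
      · -- 1 ≤ n < m
        have hn1R : (1:ℝ) ≤ (n:ℝ) := by exact_mod_cast hnpos
        have hnmR : (n:ℝ) ≤ (m:ℝ) - 1 := by
          have h1 : n + 1 ≤ m := by omega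
          have h2 : ((n+1:ℕ):ℝ) ≤ (m:ℝ) := Nat.cast_le.mpr h1
          push_cast at h2; linarith
        obtain ⟨c, hc⟩ : ∃ c, coh Φ = c := ⟨_, rfl⟩
        rw [hc] at hcoh0 hkey
        set lam : ℝ := 1 - ((n:ℝ)-1) * c with hlam
        have hlampos : 0 < lam := by
          have h1 : ((n:ℝ)-1) * c ≤ (2*(m:ℝ)-1) * c :=
            mul_le_mul_of_nonneg_right (by linarith) hcoh0
          rw [hlam]; nlinarith [hkey]
        have hrowsB : ∀ i ∈ (Finset.univ : Finset (Fin n)),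
            ∑ j ∈ Finset.univ.erase i, |Stmt17.G Φ i j| ≤ ((n:ℝ)-1) * c := by
          intro i _
          calc ∑ j ∈ Finset.univ.erase i, |Stmt17.G Φ i j|
              ≤ ∑ _j ∈ Finset.univ.erase i, c := by
                apply Finset.sum_le_sum; intro j hj
                have hg := Stmt17.abs_G_le_coh Φ (fun h => (Finset.mem_erase.mp hj).1 h.symm)
                rwa [hc] at hg
            _ = ((Finset.univ.erase i).card : ℝ) * c := by
                rw [Finset.sum_const, nsmul_eq_mul]
            _ = ((n:ℝ)-1) * c := by
                rw [Finset.card_erase_of_mem (Finset.mem_univ i), Finset.card_univ,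
                  Fintype.card_fin, Nat.cast_sub hnpos, Nat.cast_one]
        have hquadB : ∀ w : Fin n → ℝ, lam * ∑ j, w j ^2 ≤ ∑ i, Φ.mulVec w i ^2 := by
          intro w
          exact Stmt17.quad_lower Φ hunit' Finset.univ w
            (fun j hj => absurd (Finset.mem_univ j) hj) _ hrowsB
        have h2m1 : (0:ℝ) < 2*(m:ℝ)-1 := by linarith
        have hquant : 4*(n:ℝ) ≤ 9*(m:ℝ)*lam := by
          have hlam_lb : (2*(m:ℝ)-(n:ℝ))/(2*(m:ℝ)-1) ≤ lam := by
            rw [div_le_iff₀ h2m1, hlam]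
            nlinarith [mul_nonneg (by linarith : (0:ℝ) ≤ (n:ℝ)-1)
              (by linarith [hkey] : (0:ℝ) ≤ 1 - c * (2*(m:ℝ)-1))]
          have harith : 4*(n:ℝ) ≤ 9*(m:ℝ)*((2*(m:ℝ)-(n:ℝ))/(2*(m:ℝ)-1)) := by
            rw [← mul_div_assoc, le_div_iff₀ h2m1]
            nlinarith [mul_nonneg (by linarith : (0:ℝ) ≤ (m:ℝ)-1-(n:ℝ))
              (by linarith : (0:ℝ) ≤ 17*(m:ℝ)-4), sq_nonneg ((m:ℝ))]
          calc 4*(n:ℝ) ≤ 9*(m:ℝ)*((2*(m:ℝ)-(n:ℝ))/(2*(m:ℝ)-1)) := harith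
            _ ≤ 9*(m:ℝ)*lam := mul_le_mul_of_nonneg_left hlam_lb (by positivity)
        -- |sign| ≤ 1
        have hsign : ∀ z : ℝ, |Real.sign z| ≤ 1 := by
          intro z
          rcases lt_trichotomy z 0 with h | h | h
          · rw [Real.sign_of_neg h]; norm_num
          · rw [h, Real.sign_zero]; norm_num
          · rw [Real.sign_of_pos h]; norm_num
        have hsl1 : ∀ k, ∑ j, |s k j| ≤ β := by
          intro k
          rw [hs k]
          have h1 : ∀ j : Fin n, |if j = idx k then
              Real.sign ((fun i => Φ i (idx k)) ⬝ᵥ (y - Φ.mulVec (x k))) * β else 0|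
              = if j = idx k then
                |Real.sign ((fun i => Φ i (idx k)) ⬝ᵥ (y - Φ.mulVec (x k))) * β| else 0 := by
            intro j; split <;> simp
          calc ∑ j, |(fun j => if j = idx k then
              Real.sign ((fun i => Φ i (idx k)) ⬝ᵥ (y - Φ.mulVec (x k))) * β else 0) j|
              = ∑ j, if j = idx k then
                |Real.sign ((fun i => Φ i (idx k)) ⬝ᵥ (y - Φ.mulVec (x k))) * β| else 0 := by
                exact Finset.sum_congr rfl fun j _ => h1 j
            _ = |Real.sign ((fun i => Φ i (idx k)) ⬝ᵥ (y - Φ.mulVec (x k))) * β| := by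
                rw [Finset.sum_ite_eq' Finset.univ (idx k)]
                simp
            _ ≤ β := by
                rw [abs_mul, abs_of_pos hβ]
                calc |Real.sign _| * β ≤ 1 * β :=
                    mul_le_mul_of_nonneg_right (hsign _) hβ.le
                  _ = β := one_mul β
        have ht_step : ∀ k, l1norm (x (k+1)) ≤ l1norm (x k) + γ k * (β - l1norm (x k)) := by
          intro k
          obtain ⟨hγ0, hγ1⟩ := hγmem k
          have h1 : l1norm (x (k+1)) ≤ (1 - γ k) * l1norm (x k) + γ k * (∑ j, |s k j|) := by
            rw [hupd k]
            unfold l1norm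
            have h2 : ∀ j, |(x k + γ k • (s k - x k)) j| ≤ (1-γ k)*|x k j| + γ k * |s k j| := by
              intro j
              have h3 : (x k + γ k • (s k - x k)) j = (1-γ k)*(x k j) + γ k * (s k j) := by
                simp only [Pi.add_apply, Pi.smul_apply, Pi.sub_apply, smul_eq_mul]; ring
              rw [h3]
              calc |(1-γ k)*(x k j) + γ k * (s k j)|
                  ≤ |(1-γ k)*(x k j)| + |γ k * (s k j)| := abs_add_le _ _
                _ = (1-γ k)*|x k j| + γ k * |s k j| := by
                    rw [abs_mul, abs_mul, abs_of_nonneg (by linarith : (0:ℝ) ≤ 1 - γ k),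
                      abs_of_nonneg hγ0]
            calc ∑ j, |(x k + γ k • (s k - x k)) j|
                ≤ ∑ j, ((1-γ k)*|x k j| + γ k * |s k j|) :=
                  Finset.sum_le_sum (fun j _ => h2 j)
              _ = (1 - γ k) * (∑ j, |x k j|) + γ k * (∑ j, |s k j|) := by
                  rw [Finset.sum_add_distrib, ← Finset.mul_sum, ← Finset.mul_sum]
          have h4 : γ k * (∑ j, |s k j|) ≤ γ k * β := mul_le_mul_of_nonneg_left (hsl1 k) hγ0
          have h5 : (1-γ k) * l1norm (x k) + γ k * β
              = l1norm (x k) + γ k * (β - l1norm (x k)) := by ring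
          linarith
        have hTb : ∀ k, l1norm (x k) ≤ β := by
          intro k
          induction k with
          | zero =>
            have : l1norm (x 0) = 0 := by rw [hx0]; unfold l1norm; simp
            rw [this]; exact hβ.le
          | succ k ih =>
            have h := ht_step k
            obtain ⟨hγ0, hγ1⟩ := hγmem k
            nlinarith [h, ih, mul_nonneg (by linarith : (0:ℝ) ≤ 1 - γ k)
              (by linarith : (0:ℝ) ≤ β - l1norm (x k))]
        -- the dynamic invariant
        have hInv : ∀ k, Real.sqrt lam * l1norm (x k)
            ≤ 2 * Real.sqrt (n:ℝ) * (Real.sqrt Y2 - Real.sqrt (Fq k)) := by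
          intro k
          induction k with
          | zero =>
            have h1 : l1norm (x 0) = 0 := by rw [hx0]; unfold l1norm; simp
            rw [h1, hF0, mul_zero, sub_self, mul_zero]
          | succ k ih =>
            obtain ⟨hγ0, hγ1⟩ := hγmem k
            by_cases hFk0 : Fq k = 0
            · -- residual already zero
              have hr0 : y - Φ.mulVec (x k) = 0 := by
                funext i
                have h6 : ∀ i ∈ Finset.univ, (0:ℝ) ≤ (y i - Φ.mulVec (x k) i)^2 :=
                  fun _ _ => sq_nonneg _
                have h7 := (Finset.sum_eq_zero_iff_of_nonneg h6).mp hFk0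
                have h8 := h7 i (Finset.mem_univ i)
                have h9 : y i - Φ.mulVec (x k) i = 0 := by
                  exact pow_eq_zero_iff (by norm_num) |>.mp h8
                simpa [Pi.sub_apply] using h9
              have hs0 : s k = 0 := by
                rw [hs k]; funext j
                by_cases hj : j = idx k
                · simp [hj, hr0, dotProduct_zero, Real.sign_zero]
                · simp [hj]
              have ht' : l1norm (x (k+1)) ≤ l1norm (x k) := by
                rw [hupd k, hs0]
                unfold l1norm
                apply Finset.sum_le_sum
                intro j _
                have h3 : (x k + γ k • ((0 : Fin n → ℝ) - x k)) j = (1-γ k)*(x k j) := by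
                  simp only [Pi.add_apply, Pi.smul_apply, Pi.sub_apply, Pi.zero_apply,
                    smul_eq_mul]; ring
                rw [h3, abs_mul, abs_of_nonneg (by linarith : (0:ℝ) ≤ 1 - γ k)]
                nlinarith [abs_nonneg (x k j)]
              have hFk1 : Fq (k+1) = 0 :=
                le_antisymm (hFk0 ▸ hFstep k) (hFnn _)
              calc Real.sqrt lam * l1norm (x (k+1))
                  ≤ Real.sqrt lam * l1norm (x k) :=
                    mul_le_mul_of_nonneg_left ht' (Real.sqrt_nonneg _)
                _ ≤ 2 * Real.sqrt (n:ℝ) * (Real.sqrt Y2 - Real.sqrt (Fq k)) := ih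
                _ = 2 * Real.sqrt (n:ℝ) * (Real.sqrt Y2 - Real.sqrt (Fq (k+1))) := by
                    rw [hFk0, hFk1]
            · -- positive residual
              have hFkpos : 0 < Fq k := lt_of_le_of_ne (hFnn k) (Ne.symm hFk0)
              set w : Fin n → ℝ := s k - x k with hw
              set num : ℝ := ∑ i, (y i - Φ.mulVec (x k) i) * Φ.mulVec w i with hnum
              set den : ℝ := ∑ i, Φ.mulVec w i ^ 2 with hden
              have hdennn : 0 ≤ den := by rw [hden]; positivity
              have hq : ∀ g : ℝ, ∑ i, (y i - Φ.mulVec (x k + g • w) i)^2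
                  = Fq k - 2*g*num + g^2*den := by
                intro g
                have hmv : ∀ i, Φ.mulVec (x k + g • w) i
                    = Φ.mulVec (x k) i + g * Φ.mulVec w i := by
                  intro i
                  rw [Matrix.mulVec_add, Matrix.mulVec_smul]
                  simp [Pi.smul_apply, smul_eq_mul]
                rw [hFq, hnum, hden]
                calc ∑ i, (y i - Φ.mulVec (x k + g • w) i)^2
                    = ∑ i, ((y i - Φ.mulVec (x k) i)^2
                        - 2*g*((y i - Φ.mulVec (x k) i) * Φ.mulVec w i)
                        + g^2 * Φ.mulVec w i ^2) := by
                      refine Finset.sum_congr rfl fun i _ => ?_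
                      rw [hmv i]; ring
                  _ = _ := by
                      rw [Finset.sum_add_distrib, Finset.sum_sub_distrib,
                        ← Finset.mul_sum, ← Finset.mul_sum]
              have hF1 : Fq (k+1) = Fq k - 2*(γ k)*num + (γ k)^2*den := by
                have h := hq (γ k)
                calc Fq (k+1) = ∑ i, (y i - Φ.mulVec (x k + γ k • w) i)^2 := by
                      rw [hFq]; simp only [hupd k]; rfl
                  _ = _ := h
              have hkey2 : (γ k)^2 * den ≤ γ k * num := by
                rcases eq_or_lt_of_le hγ0 with hg0 | hgpos
                · rw [← hg0]; simp
                · have h2 : ∀ ε : ℝ, 0 < ε → ε ≤ γ k → (2*(γ k) - ε) * den ≤ 2 * num := by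
                    intro ε hε hεγ
                    have hmem' : γ k - ε ∈ Set.Icc (0:ℝ) 1 := ⟨by linarith, by linarith⟩
                    have h3 := hγmin k (γ k - ε) hmem'
                    rw [hq (γ k), hq (γ k - ε)] at h3
                    nlinarith [h3, hε]
                  have h3 : γ k * den ≤ num := by
                    by_contra hcon
                    push_neg at hcon
                    set ε := min (γ k) ((γ k * den - num)/(den+1)) with hεd
                    have hεpos : 0 < ε :=
                      lt_min hgpos (div_pos (by linarith) (by linarith))
                    have h4 := h2 ε hεpos (min_le_left _ _)
                    have h5 : ε * den ≤ γ k * den - num := by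
                      calc ε * den ≤ ((γ k * den - num)/(den+1)) * den :=
                          mul_le_mul_of_nonneg_right (min_le_right _ _) hdennn
                        _ ≤ γ k * den - num := by
                            rw [div_mul_eq_mul_div, div_le_iff₀ (by linarith : (0:ℝ) < den + 1)]
                            nlinarith
                    linarith
                  calc (γ k)^2 * den = γ k * (γ k * den) := by ring
                    _ ≤ γ k * num := mul_le_mul_of_nonneg_left h3 hgpos.le
              set cs : ℝ := (fun i => Φ i (idx k)) ⬝ᵥ (y - Φ.mulVec (x k)) with hcsd
              have hnum_ge : (β - l1norm (x k)) * |cs| ≤ num := by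
                have h1 : num = ∑ j, w j * ((fun i => Φ i j) ⬝ᵥ (y - Φ.mulVec (x k))) := by
                  rw [hnum]; exact hip k w
                have h3 : num = (∑ j, s k j * ((fun i => Φ i j) ⬝ᵥ (y - Φ.mulVec (x k))))
                    - ∑ j, x k j * ((fun i => Φ i j) ⬝ᵥ (y - Φ.mulVec (x k))) := by
                  rw [h1, ← Finset.sum_sub_distrib]
                  refine Finset.sum_congr rfl fun j _ => ?_
                  have h2 : w j = s k j - x k j := by rw [hw]; rfl
                  rw [h2]; ring
                have h4 : ∑ j, s k j * ((fun i => Φ i j) ⬝ᵥ (y - Φ.mulVec (x k)))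
                    = Real.sign cs * β * cs := by
                  rw [hs k]
                  have h5 : ∀ j : Fin n, (if j = idx k then Real.sign cs * β else 0)
                      * ((fun i => Φ i j) ⬝ᵥ (y - Φ.mulVec (x k)))
                      = if j = idx k then
                        Real.sign cs * β * ((fun i => Φ i j) ⬝ᵥ (y - Φ.mulVec (x k))) else 0 := by
                    intro j; split <;> simp
                  calc ∑ j, (fun j => if j = idx k then Real.sign cs * β else 0) j
                        * ((fun i => Φ i j) ⬝ᵥ (y - Φ.mulVec (x k)))
                      = ∑ j, if j = idx k then
                          Real.sign cs * β * ((fun i => Φ i j) ⬝ᵥ (y - Φ.mulVec (x k))) else 0 :=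
                        Finset.sum_congr rfl fun j _ => h5 j
                    _ = Real.sign cs * β * cs := by
                        rw [Finset.sum_ite_eq' Finset.univ (idx k)]
                        simp [hcsd]
                have h6 : Real.sign cs * β * cs = β * |cs| := by
                  rcases lt_trichotomy cs 0 with h | h | h
                  · rw [Real.sign_of_neg h, abs_of_neg h]; ring
                  · rw [h, Real.sign_zero, abs_zero]; ring
                  · rw [Real.sign_of_pos h, abs_of_pos h]; ring
                have h7 : ∑ j, x k j * ((fun i => Φ i j) ⬝ᵥ (y - Φ.mulVec (x k)))
                    ≤ l1norm (x k) * |cs| := by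
                  unfold l1norm
                  rw [Finset.sum_mul]
                  apply Finset.sum_le_sum
                  intro j _
                  calc x k j * ((fun i => Φ i j) ⬝ᵥ (y - Φ.mulVec (x k)))
                      ≤ |x k j * ((fun i => Φ i j) ⬝ᵥ (y - Φ.mulVec (x k)))| := le_abs_self _
                    _ = |x k j| * |(fun i => Φ i j) ⬝ᵥ (y - Φ.mulVec (x k))| := abs_mul _ _
                    _ ≤ |x k j| * |cs| := by
                        apply mul_le_mul_of_nonneg_left _ (abs_nonneg _)
                        rw [hcsd]; exact hsel k j
                rw [h3, h4, h6]
                nlinarith [h7]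
              -- λ Fk ≤ n cs²
              have hlamF : lam * Fq k ≤ (n:ℝ) * cs^2 := by
                set v : Fin n → ℝ := xstar - x k with hv
                have hrv : ∀ i, y i - Φ.mulVec (x k) i = Φ.mulVec v i := by
                  intro i
                  have := congrFun (hres k) i
                  simpa [Pi.sub_apply] using this
                have hFv : Fq k = ∑ j, v j * ((fun i => Φ i j) ⬝ᵥ (y - Φ.mulVec (x k))) := by
                  rw [hFq]
                  calc ∑ i, (y i - Φ.mulVec (x k) i)^2
                      = ∑ i, (y i - Φ.mulVec (x k) i) * Φ.mulVec v i := by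
                        refine Finset.sum_congr rfl fun i _ => ?_
                        rw [← hrv i]; ring
                    _ = _ := hip k v
                set L : ℝ := ∑ j, |v j| with hL
                have hLnn : 0 ≤ L := by rw [hL]; positivity
                have hFL : Fq k ≤ |cs| * L := by
                  rw [hFv, hL, Finset.mul_sum]
                  apply Finset.sum_le_sum
                  intro j _
                  calc v j * ((fun i => Φ i j) ⬝ᵥ (y - Φ.mulVec (x k)))
                      ≤ |v j * ((fun i => Φ i j) ⬝ᵥ (y - Φ.mulVec (x k)))| := le_abs_self _
                    _ = |v j| * |(fun i => Φ i j) ⬝ᵥ (y - Φ.mulVec (x k))| := abs_mul _ _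
                    _ ≤ |v j| * |cs| := by
                        apply mul_le_mul_of_nonneg_left _ (abs_nonneg _)
                        rw [hcsd]; exact hsel k j
                    _ = |cs| * |v j| := mul_comm _ _
                have hL2 : L^2 ≤ (n:ℝ) * ∑ j, v j ^2 := by
                  rw [hL]
                  calc (∑ j, |v j|)^2 ≤ ((Finset.univ : Finset (Fin n)).card : ℝ)
                        * ∑ j, |v j|^2 :=
                        sq_sum_le_card_mul_sum_sq (s := Finset.univ) (f := fun j => |v j|)
                    _ = (n:ℝ) * ∑ j, v j ^2 := by
                        rw [Finset.card_univ, Fintype.card_fin]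
                        simp [sq_abs]
                have hquadv : lam * ∑ j, v j ^2 ≤ Fq k := by
                  have h := hquadB v
                  have h8 : ∑ i, Φ.mulVec v i ^2 = Fq k := by
                    rw [hFq]
                    exact Finset.sum_congr rfl fun i _ => by rw [← hrv i]
                  rwa [h8] at h
                have e1 : Fq k ^2 ≤ cs^2 * L^2 := by
                  have := mul_self_le_mul_self (hFnn k) hFL
                  calc Fq k ^2 = Fq k * Fq k := sq (Fq k)
                    _ ≤ (|cs| * L) * (|cs| * L) := this
                    _ = cs^2 * L^2 := by rw [← sq_abs cs]; ring
                have e2 : cs^2 * L^2 ≤ cs^2 * ((n:ℝ) * ∑ j, v j ^2) :=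
                  mul_le_mul_of_nonneg_left hL2 (sq_nonneg cs)
                have e3 : lam * Fq k ^2 ≤ ((n:ℝ) * cs^2) * (lam * ∑ j, v j ^2) := by
                  calc lam * Fq k ^2 ≤ lam * (cs^2 * ((n:ℝ) * ∑ j, v j ^2)) :=
                      mul_le_mul_of_nonneg_left (e1.trans e2) hlampos.le
                    _ = ((n:ℝ) * cs^2) * (lam * ∑ j, v j ^2) := by ring
                have e4 : ((n:ℝ) * cs^2) * (lam * ∑ j, v j ^2) ≤ ((n:ℝ) * cs^2) * Fq k :=
                  mul_le_mul_of_nonneg_left hquadv (by positivity)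
                have e5 : (lam * Fq k) * Fq k ≤ ((n:ℝ) * cs^2) * Fq k := by
                  calc (lam * Fq k) * Fq k = lam * Fq k ^2 := by ring
                    _ ≤ ((n:ℝ) * cs^2) * Fq k := e3.trans e4
                exact le_of_mul_le_mul_right e5 hFkpos
              have hsqrt_cs : Real.sqrt lam * Real.sqrt (Fq k) ≤ Real.sqrt (n:ℝ) * |cs| := by
                have h := Real.sqrt_le_sqrt hlamF
                rwa [Real.sqrt_mul hlampos.le, Real.sqrt_mul (Nat.cast_nonneg n),
                  Real.sqrt_sq_eq_abs] at h
              -- step bound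
              have hβt : 0 ≤ β - l1norm (x k) := by linarith [hTb k]
              have hRpos : 0 < Real.sqrt (Fq k) := Real.sqrt_pos.mpr hFkpos
              have ha : γ k * ((β - l1norm (x k)) * |cs|) ≤ Fq k - Fq (k+1) := by
                have h9 : γ k * num ≤ 2*(γ k)*num - (γ k)^2*den := by linarith [hkey2]
                have h10 : γ k * ((β - l1norm (x k))*|cs|) ≤ γ k * num :=
                  mul_le_mul_of_nonneg_left hnum_ge hγ0
                rw [hF1]; linarith
              have hb : Fq k - Fq (k+1) ≤ 2*Real.sqrt (Fq k)
                  *(Real.sqrt (Fq k) - Real.sqrt (Fq (k+1))) := by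
                nlinarith [Real.sq_sqrt (hFnn k), Real.sq_sqrt (hFnn (k+1)),
                  sq_nonneg (Real.sqrt (Fq k) - Real.sqrt (Fq (k+1)))]
              have hstepb : Real.sqrt lam * (γ k * (β - l1norm (x k)))
                  ≤ 2 * Real.sqrt (n:ℝ) * (Real.sqrt (Fq k) - Real.sqrt (Fq (k+1))) := by
                have hc2 : (γ k * (β - l1norm (x k))) * (Real.sqrt lam * Real.sqrt (Fq k))
                    ≤ (γ k * (β - l1norm (x k))) * (Real.sqrt (n:ℝ) * |cs|) :=
                  mul_le_mul_of_nonneg_left hsqrt_cs (mul_nonneg hγ0 hβt)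
                have hc4 : Real.sqrt (n:ℝ) * (γ k * ((β - l1norm (x k))*|cs|))
                    ≤ Real.sqrt (n:ℝ) * (Fq k - Fq (k+1)) :=
                  mul_le_mul_of_nonneg_left ha (Real.sqrt_nonneg _)
                have hc5 : Real.sqrt (n:ℝ) * (Fq k - Fq (k+1))
                    ≤ Real.sqrt (n:ℝ) * (2*Real.sqrt (Fq k)
                      *(Real.sqrt (Fq k) - Real.sqrt (Fq (k+1)))) :=
                  mul_le_mul_of_nonneg_left hb (Real.sqrt_nonneg _)
                have hc6 : (Real.sqrt lam * (γ k * (β - l1norm (x k)))) * Real.sqrt (Fq k)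
                    ≤ (2 * Real.sqrt (n:ℝ) * (Real.sqrt (Fq k) - Real.sqrt (Fq (k+1))))
                      * Real.sqrt (Fq k) := by
                  have e1 : (Real.sqrt lam * (γ k * (β - l1norm (x k)))) * Real.sqrt (Fq k)
                      = (γ k * (β - l1norm (x k))) * (Real.sqrt lam * Real.sqrt (Fq k)) := by ring
                  have e2 : (γ k * (β - l1norm (x k))) * (Real.sqrt (n:ℝ) * |cs|)
                      = Real.sqrt (n:ℝ) * (γ k * ((β - l1norm (x k))*|cs|)) := by ring
                  have e3 : Real.sqrt (n:ℝ) * (2*Real.sqrt (Fq k)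
                      *(Real.sqrt (Fq k) - Real.sqrt (Fq (k+1))))
                      = (2 * Real.sqrt (n:ℝ) * (Real.sqrt (Fq k) - Real.sqrt (Fq (k+1))))
                        * Real.sqrt (Fq k) := by ring
                  rw [e1, ← e3]
                  calc (γ k * (β - l1norm (x k))) * (Real.sqrt lam * Real.sqrt (Fq k))
                      ≤ (γ k * (β - l1norm (x k))) * (Real.sqrt (n:ℝ) * |cs|) := hc2
                    _ = Real.sqrt (n:ℝ) * (γ k * ((β - l1norm (x k))*|cs|)) := e2
                    _ ≤ Real.sqrt (n:ℝ) * (Fq k - Fq (k+1)) := hc4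
                    _ ≤ _ := hc5
                exact le_of_mul_le_mul_right hc6 hRpos
              calc Real.sqrt lam * l1norm (x (k+1))
                  ≤ Real.sqrt lam * (l1norm (x k) + γ k * (β - l1norm (x k))) :=
                    mul_le_mul_of_nonneg_left (ht_step k) (Real.sqrt_nonneg _)
                _ = Real.sqrt lam * l1norm (x k)
                    + Real.sqrt lam * (γ k * (β - l1norm (x k))) := by ring
                _ ≤ 2 * Real.sqrt (n:ℝ) * (Real.sqrt Y2 - Real.sqrt (Fq k))
                    + 2 * Real.sqrt (n:ℝ) * (Real.sqrt (Fq k) - Real.sqrt (Fq (k+1))) :=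
                    add_le_add ih hstepb
                _ = 2 * Real.sqrt (n:ℝ) * (Real.sqrt Y2 - Real.sqrt (Fq (k+1))) := by ring
        -- static bound
        have hstat : ∀ k, Real.sqrt lam * l1norm (x k)
            ≤ Real.sqrt (n:ℝ) * (Real.sqrt Y2 + Real.sqrt (Fq k)) := by
          intro k
          have hcsX : (l1norm (x k))^2 ≤ (n:ℝ) * ∑ j, x k j ^2 := by
            unfold l1norm
            calc (∑ j, |x k j|)^2 ≤ ((Finset.univ : Finset (Fin n)).card : ℝ)
                  * ∑ j, |x k j|^2 :=
                  sq_sum_le_card_mul_sum_sq (s := Finset.univ) (f := fun j => |x k j|)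
              _ = (n:ℝ) * ∑ j, x k j ^2 := by
                  rw [Finset.card_univ, Fintype.card_fin]
                  simp [sq_abs]
          have hq2 : lam * ∑ j, x k j^2 ≤ ∑ i, Φ.mulVec (x k) i ^2 := hquadB (x k)
          have hmk : ∑ i, Φ.mulVec (x k) i ^2 ≤ (Real.sqrt Y2 + Real.sqrt (Fq k))^2 := by
            have h := Stmt17.minkow y (fun i => y i - Φ.mulVec (x k) i)
            have h1 : ∑ i, (y i - (y i - Φ.mulVec (x k) i))^2 = ∑ i, Φ.mulVec (x k) i ^2 :=
              Finset.sum_congr rfl fun i _ => by ring_nf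
            rw [h1] at h
            have h2 : ∑ i, (y i - Φ.mulVec (x k) i)^2 = Fq k := by rw [hFq]
            rw [h2, ← hY2] at h
            exact h
          have h3 : lam * (l1norm (x k))^2
              ≤ (n:ℝ) * (Real.sqrt Y2 + Real.sqrt (Fq k))^2 := by
            calc lam * (l1norm (x k))^2 ≤ lam * ((n:ℝ) * ∑ j, x k j ^2) :=
                mul_le_mul_of_nonneg_left hcsX hlampos.le
              _ = (n:ℝ) * (lam * ∑ j, x k j ^2) := by ring
              _ ≤ (n:ℝ) * (∑ i, Φ.mulVec (x k) i ^2) :=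
                  mul_le_mul_of_nonneg_left hq2 (Nat.cast_nonneg n)
              _ ≤ (n:ℝ) * (Real.sqrt Y2 + Real.sqrt (Fq k))^2 :=
                  mul_le_mul_of_nonneg_left hmk (Nat.cast_nonneg n)
          have h4 := Real.sqrt_le_sqrt h3
          rwa [Real.sqrt_mul hlampos.le, Real.sqrt_mul (Nat.cast_nonneg n),
            Real.sqrt_sq (hl1nn _),
            Real.sqrt_sq (by positivity : (0:ℝ) ≤ Real.sqrt Y2 + Real.sqrt (Fq k))] at h4
        -- combine
        intro k
        have hA := hInv k
        have hS := hstat k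
        have h3A : 3 * (Real.sqrt lam * l1norm (x k))
            ≤ 4 * Real.sqrt (n:ℝ) * Real.sqrt Y2 := by linarith
        have h46 : 4 * Real.sqrt (n:ℝ) ≤ 6 * Real.sqrt ((m:ℝ)) * Real.sqrt lam := by
          have h1 : (16:ℝ)*(n:ℝ) ≤ 36*(m:ℝ)*lam := by linarith
          calc 4 * Real.sqrt (n:ℝ) = Real.sqrt (16*(n:ℝ)) := by
                rw [Real.sqrt_mul (by norm_num : (0:ℝ) ≤ 16),
                  show Real.sqrt (16:ℝ) = 4 by
                    rw [show (16:ℝ) = 4^2 by norm_num,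
                      Real.sqrt_sq (by norm_num : (0:ℝ) ≤ 4)]]
            _ ≤ Real.sqrt (36*(m:ℝ)*lam) := Real.sqrt_le_sqrt h1
            _ = 6 * Real.sqrt ((m:ℝ)) * Real.sqrt lam := by
                rw [show (36:ℝ)*(m:ℝ)*lam = 36*((m:ℝ)*lam) by ring,
                  Real.sqrt_mul (by norm_num : (0:ℝ) ≤ 36),
                  Real.sqrt_mul (Nat.cast_nonneg m),
                  show Real.sqrt (36:ℝ) = 6 by
                    rw [show (36:ℝ) = 6^2 by norm_num,
                      Real.sqrt_sq (by norm_num : (0:ℝ) ≤ 6)]]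
                ring
        have hslpos : 0 < Real.sqrt lam := Real.sqrt_pos.mpr hlampos
        have h7 : 3 * Real.sqrt lam * l1norm (x k)
            ≤ (6 * Real.sqrt ((m:ℝ)) * Real.sqrt lam) * Real.sqrt Y2 := by
          calc 3 * Real.sqrt lam * l1norm (x k)
              ≤ 4 * Real.sqrt (n:ℝ) * Real.sqrt Y2 := by linarith [h3A]
            _ ≤ (6 * Real.sqrt ((m:ℝ)) * Real.sqrt lam) * Real.sqrt Y2 :=
                mul_le_mul_of_nonneg_right h46 (Real.sqrt_nonneg _)
        have h8 : l1norm (x k) ≤ 2 * Real.sqrt Y2 * Real.sqrt ((m:ℝ)) := by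
          have h9 : (3 * Real.sqrt lam) * l1norm (x k)
              ≤ (3 * Real.sqrt lam) * (2 * Real.sqrt Y2 * Real.sqrt ((m:ℝ))) := by
            calc (3 * Real.sqrt lam) * l1norm (x k)
                = 3 * Real.sqrt lam * l1norm (x k) := by ring
              _ ≤ (6 * Real.sqrt ((m:ℝ)) * Real.sqrt lam) * Real.sqrt Y2 := h7
              _ = (3 * Real.sqrt lam) * (2 * Real.sqrt Y2 * Real.sqrt ((m:ℝ))) := by ring
          exact le_of_mul_le_mul_left h9 (by positivity)
        rw [hB0, sub_zero, div_one, hl2y]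
        calc l1norm (x k) ≤ 2 * Real.sqrt Y2 * Real.sqrt ((m:ℝ)) := h8
          _ = 2 * Real.sqrt Y2 * Real.sqrt ((m:ℝ)) := rfl
end

section
/- Assume m < (1/2)(1/μ + 1), y = Φx* is m-sparse, and β > 2‖y‖₂ √(m/(1 − μ₁(m−1))). Then for every iteration k of the Frank–Wolfe algorithm, ‖r_{k+1}‖₂² ≤ ‖r_k‖₂² (1 − (1 − μ₁(m−1))/(4m) · (1 − τ)²), where τ = (2‖y‖₂/β)√(m/(1 − μ₁(m−1))) ∈ (0,1); i.e., exponential convergence holds from the first iteration. -/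
open Matrix BigOperators Finset Filter

noncomputable def gram {d n : ℕ} (Φ : Matrix (Fin d) (Fin n) ℝ) (j l : Fin n) : ℝ :=
  (fun i => Φ i j) ⬝ᵥ (fun i => Φ i l)

lemma dot_sq_le {d : ℕ} (v w : Fin d → ℝ) :
    (v ⬝ᵥ w)^2 ≤ (∑ i, v i^2) * (∑ i, w i^2) := by
  simpa [dotProduct] using Finset.sum_mul_sq_le_sq_mul_sq Finset.univ v w

lemma abs_dot_le {d : ℕ} (v w : Fin d → ℝ) :
    |v ⬝ᵥ w| ≤ Real.sqrt (∑ i, v i^2) * Real.sqrt (∑ i, w i^2) := by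
  rw [← Real.sqrt_sq_eq_abs, ← Real.sqrt_mul (by positivity)]
  exact Real.sqrt_le_sqrt (dot_sq_le v w)

lemma dot_mulVec' {d n : ℕ} (Φ : Matrix (Fin d) (Fin n) ℝ) (v : Fin n → ℝ) (w : Fin d → ℝ) :
    (Φ.mulVec v) ⬝ᵥ w = ∑ j, v j * ((fun i => Φ i j) ⬝ᵥ w) := by
  simp only [dotProduct, Matrix.mulVec, Finset.sum_mul, Finset.mul_sum]
  rw [Finset.sum_comm]
  apply Finset.sum_congr rfl; intro j _
  apply Finset.sum_congr rfl; intro i _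
  ring

lemma col_dot_mulVec {d n : ℕ} (Φ : Matrix (Fin d) (Fin n) ℝ) (z : Fin n → ℝ) (j : Fin n) :
    (fun i => Φ i j) ⬝ᵥ (Φ.mulVec z) = ∑ l, z l * gram Φ j l := by
  rw [dotProduct_comm, dot_mulVec' Φ z]
  apply Finset.sum_congr rfl; intro l _
  rw [_root_.gram, dotProduct_comm]

lemma sum_sub_smul_sq {d : ℕ} (r t : Fin d → ℝ) (c : ℝ) :
    ∑ i, (r i - c * t i)^2 = (∑ i, r i^2) - 2*c*(t ⬝ᵥ r) + c^2 * ∑ i, t i^2 := by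
  simp only [dotProduct, Finset.mul_sum, ← Finset.sum_add_distrib,
    ← Finset.sum_sub_distrib]
  apply Finset.sum_congr rfl; intros; ring

lemma sum_sq_expand {n : ℕ} (Λ : Finset (Fin n)) (a : Fin n → ℝ) :
    (∑ j ∈ Λ, a j)^2 = ∑ j ∈ Λ, (a j)^2 + ∑ j ∈ Λ, ∑ l ∈ Λ.erase j, a j * a l := by
  rw [sq, Finset.sum_mul_sum, ← Finset.sum_add_distrib]
  apply Finset.sum_congr rfl; intro j hj
  rw [← Finset.add_sum_erase _ _ hj, sq]

lemma mulVec_sq_expand {d n : ℕ} (Φ : Matrix (Fin d) (Fin n) ℝ) (z : Fin n → ℝ) :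
    ∑ i, (Φ.mulVec z i)^2 = ∑ j, ∑ l, z j * z l * gram Φ j l := by
  simp only [Matrix.mulVec, dotProduct, sq, Finset.sum_mul_sum, _root_.gram]
  rw [Finset.sum_comm]
  apply Finset.sum_congr rfl; intro j _
  rw [Finset.sum_comm]
  apply Finset.sum_congr rfl; intro l _
  rw [Finset.mul_sum]
  apply Finset.sum_congr rfl; intro i _
  ring

lemma quadform_lb {d n : ℕ} (Φ : Matrix (Fin d) (Fin n) ℝ)
    (hdiag : ∀ j, gram Φ j j = 1)
    (μ : ℝ) (hμ0 : 0 ≤ μ)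
    (hμ : ∀ j l, j ≠ l → |gram Φ j l| ≤ μ)
    (Λ : Finset (Fin n)) (z : Fin n → ℝ) (hz : ∀ j ∉ Λ, z j = 0) :
    (1 - ((Λ.card:ℝ) - 1) * μ) * (∑ j, z j^2) ≤ ∑ i, (Φ.mulVec z i)^2 := by
  have expand := mulVec_sq_expand Φ z
  have hrestrict : ∑ j, ∑ l, z j * z l * gram Φ j l
      = ∑ j ∈ Λ, ∑ l ∈ Λ, z j * z l * gram Φ j l := by
    rw [← Finset.sum_subset (Finset.subset_univ Λ) (by intro j _ hj; simp [hz j hj])]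
    apply Finset.sum_congr rfl; intro j _
    rw [← Finset.sum_subset (Finset.subset_univ Λ) (by intro l _ hl; simp [hz l hl])]
  set S := ∑ j ∈ Λ, z j ^ 2 with hS
  have hsplit : ∑ j ∈ Λ, ∑ l ∈ Λ, z j * z l * gram Φ j l
      = S + ∑ j ∈ Λ, ∑ l ∈ Λ.erase j, z j * z l * gram Φ j l := by
    rw [hS, ← Finset.sum_add_distrib]
    apply Finset.sum_congr rfl; intro j hj
    rw [← Finset.add_sum_erase Λ (fun l => z j * z l * gram Φ j l) hj]
    simp only [hdiag]
    ring
  set E := ∑ j ∈ Λ, ∑ l ∈ Λ.erase j, z j * z l * gram Φ j l with hE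
  have hSnonneg : 0 ≤ S := Finset.sum_nonneg (fun _ _ => sq_nonneg _)
  have habs : |E| ≤ μ * (((Λ.card:ℝ) - 1) * S) := by
    calc |E| ≤ ∑ j ∈ Λ, |∑ l ∈ Λ.erase j, z j * z l * gram Φ j l| :=
          Finset.abs_sum_le_sum_abs _ _
      _ ≤ ∑ j ∈ Λ, ∑ l ∈ Λ.erase j, |z j| * |z l| * μ := by
          apply Finset.sum_le_sum; intro j hj
          refine le_trans (Finset.abs_sum_le_sum_abs _ _) ?_
          apply Finset.sum_le_sum; intro l hl
          rw [abs_mul, abs_mul]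
          exact mul_le_mul_of_nonneg_left (hμ j l (fun h => (Finset.ne_of_mem_erase hl) h.symm))
            (by positivity)
      _ = μ * ∑ j ∈ Λ, ∑ l ∈ Λ.erase j, |z j| * |z l| := by
          rw [Finset.mul_sum]; apply Finset.sum_congr rfl; intro j _
          rw [Finset.mul_sum]; apply Finset.sum_congr rfl; intro l _; ring
      _ ≤ μ * (((Λ.card:ℝ) - 1) * S) := by
          apply mul_le_mul_of_nonneg_left _ hμ0
          have h1 : ∑ j ∈ Λ, ∑ l ∈ Λ.erase j, |z j| * |z l|
              = (∑ j ∈ Λ, |z j|)^2 - ∑ j ∈ Λ, z j ^2 := by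
            rw [sum_sq_expand Λ (fun j => |z j|)]
            simp [sq_abs]
          have h2 : (∑ j ∈ Λ, |z j|)^2 ≤ (Λ.card:ℝ) * S := by
            have := sq_sum_le_card_mul_sum_sq (s := Λ) (f := fun j => |z j|)
            simpa [sq_abs, hS] using this
          rw [h1]
          linarith
  have hEtotal : ∑ j, z j ^2 = S := by
    rw [hS, ← Finset.sum_subset (Finset.subset_univ Λ) (by intro j _ hj; simp [hz j hj])]
  rw [expand, hrestrict, hsplit, hEtotal]
  nlinarith [hSnonneg, habs, neg_abs_le E]

lemma recovery_step {d n : ℕ} (Φ : Matrix (Fin d) (Fin n) ℝ)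
    (hdiag : ∀ j, gram Φ j j = 1)
    (μ : ℝ)
    (hμ : ∀ j l, j ≠ l → |gram Φ j l| ≤ μ)
    (Λ : Finset (Fin n)) (z : Fin n → ℝ) (hz : ∀ j ∉ Λ, z j = 0)
    (hzne : ∃ j, z j ≠ 0) (i : Fin n) (hi : i ∉ Λ)
    (hμm : (2*(Λ.card:ℝ) - 1) * μ < 1) :
    ∃ j, |(fun a => Φ a i) ⬝ᵥ (Φ.mulVec z)| < |(fun a => Φ a j) ⬝ᵥ (Φ.mulVec z)| := by
  obtain ⟨j₀, hj₀⟩ := hzne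
  have hj₀Λ : j₀ ∈ Λ := by by_contra h; exact hj₀ (hz _ h)
  obtain ⟨J, hJΛ, hJ⟩ := Finset.exists_max_image Λ (fun j => |z j|) ⟨j₀, hj₀Λ⟩
  set Z := |z J| with hZ
  have hZpos : 0 < Z := lt_of_lt_of_le (abs_pos.mpr hj₀) (hJ j₀ hj₀Λ)
  set c := (Λ.card : ℝ) with hc
  have hc1 : 1 ≤ c := by
    rw [hc]; exact_mod_cast Finset.card_pos.mpr ⟨J, hJΛ⟩
  have hdot : ∀ t : Fin n, (fun a => Φ a t) ⬝ᵥ (Φ.mulVec z) = ∑ l ∈ Λ, z l * gram Φ t l := by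
    intro t
    rw [col_dot_mulVec]
    rw [← Finset.sum_subset (Finset.subset_univ Λ) (by intro l _ hl; simp [hz l hl])]
  refine ⟨J, ?_⟩
  have hub : |(fun a => Φ a i) ⬝ᵥ (Φ.mulVec z)| ≤ c * (Z * μ) := by
    rw [hdot i]
    refine le_trans (Finset.abs_sum_le_sum_abs _ _) ?_
    have : ∀ l ∈ Λ, |z l * gram Φ i l| ≤ Z * μ := by
      intro l hl
      rw [abs_mul]
      exact mul_le_mul (hJ l hl) (hμ i l (fun h => hi (h ▸ hl))) (abs_nonneg _) hZpos.le
    refine le_trans (Finset.sum_le_sum this) ?_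
    rw [Finset.sum_const, nsmul_eq_mul, hc]
  have hlb : Z - (c - 1) * (Z * μ) ≤ |(fun a => Φ a J) ⬝ᵥ (Φ.mulVec z)| := by
    rw [hdot J, ← Finset.add_sum_erase Λ (fun l => z l * gram Φ J l) hJΛ, hdiag J, mul_one]
    have htail : |∑ l ∈ Λ.erase J, z l * gram Φ J l| ≤ (c - 1) * (Z * μ) := by
      refine le_trans (Finset.abs_sum_le_sum_abs _ _) ?_
      have : ∀ l ∈ Λ.erase J, |z l * gram Φ J l| ≤ Z * μ := by
        intro l hl
        rw [abs_mul]
        exact mul_le_mul (hJ l (Finset.mem_of_mem_erase hl))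
          (hμ J l (fun h => (Finset.ne_of_mem_erase hl) h.symm)) (abs_nonneg _) hZpos.le
      refine le_trans (Finset.sum_le_sum this) ?_
      rw [Finset.sum_const, nsmul_eq_mul, Finset.card_erase_of_mem hJΛ]
      have : ((Λ.card - 1 : ℕ) : ℝ) = c - 1 := by
        rw [hc]
        have : (1:ℕ) ≤ Λ.card := Finset.card_pos.mpr ⟨J, hJΛ⟩
        push_cast [this]
        ring
      rw [this]
    have habs : |z J| ≤ |z J + ∑ l ∈ Λ.erase J, z l * gram Φ J l|
        + |∑ l ∈ Λ.erase J, z l * gram Φ J l| := by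
      have h := abs_add_le (z J + ∑ l ∈ Λ.erase J, z l * gram Φ J l)
        (-(∑ l ∈ Λ.erase J, z l * gram Φ J l))
      simpa using h
    linarith
  refine lt_of_le_of_lt hub (lt_of_lt_of_le ?_ hlb)
  nlinarith [hZpos, hμm, hc1]

set_option maxHeartbeats 4000000 in
/-- Exponential convergence from the first iteration when
β > 2‖y‖₂ √(m/(1 − μ₁(m−1))). -/
theorem stmt18 {d n : ℕ} (Φ : Matrix (Fin d) (Fin n) ℝ)
    (hunit : ∀ j, l2norm (fun i => Φ i j) = 1)
(m : ℕ) (xstar : Fin n → ℝ) (Λopt : Finset (Fin n))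
    (hsupp : ∀ j, xstar j ≠ 0 ↔ j ∈ Λopt) (hcard : Λopt.card ≤ m)
    (hm : (m : ℝ) < (1/2) * (1 / coh Φ + 1))
    (β : ℝ) (hβ : 0 < β)
    (y : Fin d → ℝ) (hy : y = Φ.mulVec xstar)
    (x s : ℕ → Fin n → ℝ) (idx : ℕ → Fin n) (γ : ℕ → ℝ)
    (hx0 : x 0 = 0)
    (hsel : ∀ k j, |(fun i => Φ i j) ⬝ᵥ (y - Φ.mulVec (x k))| ≤
      |(fun i => Φ i (idx k)) ⬝ᵥ (y - Φ.mulVec (x k))|)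
    (hs : ∀ k, s k = fun j => if j = idx k then
      Real.sign ((fun i => Φ i (idx k)) ⬝ᵥ (y - Φ.mulVec (x k))) * β else 0)
    (hγmem : ∀ k, γ k ∈ Set.Icc (0 : ℝ) 1)
    (hγmin : ∀ k, ∀ γ' ∈ Set.Icc (0 : ℝ) 1,
      ∑ i, (y i - Φ.mulVec (x k + γ k • (s k - x k)) i) ^ 2 ≤
        ∑ i, (y i - Φ.mulVec (x k + γ' • (s k - x k)) i) ^ 2)
    (hupd : ∀ k, x (k + 1) = x k + γ k • (s k - x k))
    (hβbig : 2 * l2norm y * Real.sqrt ((m : ℝ) / (1 - babel Φ (m - 1))) < β) :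
    (2 * l2norm y / β) * Real.sqrt ((m : ℝ) / (1 - babel Φ (m - 1))) < 1 ∧
    ∀ k, ∑ i, (y i - Φ.mulVec (x (k + 1)) i) ^ 2 ≤
      (∑ i, (y i - Φ.mulVec (x k) i) ^ 2) *
        (1 - (1 - babel Φ (m - 1)) / (4 * m) *
          (1 - (2 * l2norm y / β) * Real.sqrt ((m : ℝ) / (1 - babel Φ (m - 1)))) ^ 2) := by
  classical
  obtain ⟨B, hBdef⟩ : ∃ a, a = babel Φ (m - 1) := ⟨_, rfl⟩
  rw [← hBdef] at hβbig ⊢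
  obtain ⟨Y, hYdef⟩ : ∃ a, a = l2norm y := ⟨_, rfl⟩
  rw [← hYdef] at hβbig ⊢
  obtain ⟨κ', hκ'def⟩ : ∃ a, a = Real.sqrt ((m : ℝ) / (1 - B)) := ⟨_, rfl⟩
  rw [← hκ'def] at hβbig ⊢
  have hτ : (2 * Y / β) * κ' < 1 := by
    rw [div_mul_eq_mul_div, div_lt_one hβ]; exact hβbig
  refine ⟨hτ, ?_⟩
  -- basic facts about the dictionary
  have hdsum : ∀ j, ∑ i, (Φ i j)^2 = 1 := by
    intro j
    have h := hunit j
    rw [l2norm] at h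
    have h0 : (0:ℝ) ≤ ∑ i, (Φ i j)^2 := by positivity
    nlinarith only [Real.sq_sqrt h0, h, h0]
  have hdiag : ∀ j, gram Φ j j = 1 := by
    intro j
    rw [_root_.gram, dotProduct, ← hdsum j]
    apply Finset.sum_congr rfl; intros; ring
  obtain ⟨μ, hμdef⟩ : ∃ a, a = coh Φ := ⟨_, rfl⟩
  rw [← hμdef] at hm
  have hgram1 : ∀ a b : Fin n, |gram Φ a b| ≤ 1 := by
    intro a b
    have h : (gram Φ a b)^2 ≤ 1 * 1 := by
      rw [_root_.gram]
      calc ((fun i => Φ i a) ⬝ᵥ (fun i => Φ i b))^2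
          ≤ (∑ i, (Φ i a)^2) * (∑ i, (Φ i b)^2) := dot_sq_le _ _
        _ = 1*1 := by rw [hdsum a, hdsum b]
    nlinarith only [sq_abs (gram Φ a b), abs_nonneg (gram Φ a b), h]
  have hcohmem : ∀ j l : Fin n, j ≠ l → |gram Φ j l| ≤ μ := by
    intro j l hjl
    rw [hμdef, coh]
    apply le_csSup
    · exact ⟨1, by rintro t ⟨a, b, hab, rfl⟩; exact hgram1 a b⟩
    · exact ⟨j, l, hjl, rfl⟩
  have hμ0 : 0 ≤ μ := by
    rw [hμdef, coh]
    exact Real.sSup_nonneg (by rintro t ⟨a, b, hab, rfl⟩; positivity)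
  have hμtot : (2*(m:ℝ) - 1) * μ < 1 := by
    rcases eq_or_lt_of_le hμ0 with h | h
    · rw [← h]; norm_num
    · have h1 : 2*(m:ℝ) - 1 < 1/μ := by linarith only [hm]
      calc (2*(m:ℝ) - 1) * μ < (1/μ) * μ := by
            exact mul_lt_mul_of_pos_right h1 h
        _ = 1 := by field_simp
  have hB0 : 0 ≤ B := by
    rw [hBdef, babel]
    exact Real.sSup_nonneg (by rintro t ⟨Λ, i, h1, h2, rfl⟩; positivity)
  have hY0 : 0 ≤ Y := by rw [hYdef, l2norm]; exact Real.sqrt_nonneg _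
  have hY2 : Y^2 = ∑ i, y i ^2 := by rw [hYdef, l2norm]; exact Real.sq_sqrt (by positivity)
  -- monotone decrease of residuals
  have F1 : ∀ k, ∑ i, (y i - Φ.mulVec (x (k+1)) i)^2 ≤ ∑ i, (y i - Φ.mulVec (x k) i)^2 := by
    intro k
    have h := hγmin k 0 ⟨le_refl _, zero_le_one⟩
    rw [hupd k]
    simpa using h
  have Fnn : ∀ k, (0:ℝ) ≤ ∑ i, (y i - Φ.mulVec (x k) i)^2 := fun k => by positivity
  have F2 : ∀ k, ∑ i, (y i - Φ.mulVec (x k) i)^2 ≤ Y^2 := by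
    intro k
    induction k with
    | zero => rw [hx0, hY2]; simp [Matrix.mulVec_zero]
    | succ k ih => exact le_trans (F1 k) ih
  -- support invariant
  have Inv : ∀ k, (∑ i, (y i - Φ.mulVec (x k) i)^2 = 0) ∨ (∀ j ∉ Λopt, x k j = 0) := by
    intro k
    induction k with
    | zero => right; intro j _; rw [hx0]; rfl
    | succ k ih =>
      by_cases h0 : ∑ i, (y i - Φ.mulVec (x k) i)^2 = 0
      · left
        exact le_antisymm (h0 ▸ F1 k) (Fnn (k+1))
      · right
        have hsupx := ih.resolve_left h0
        have hΦz : Φ.mulVec (xstar - x k) = y - Φ.mulVec (x k) := by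
          rw [Matrix.mulVec_sub, hy]
        have hzsupp : ∀ j ∉ Λopt, (xstar - x k) j = 0 := by
          intro j hj
          have h1 : xstar j = 0 := by
            by_contra hne; exact hj ((hsupp j).mp hne)
          simp [h1, hsupx j hj]
        have hidx : idx k ∈ Λopt := by
          by_contra hidxn
          have hzne : ∃ j, (xstar - x k) j ≠ 0 := by
            by_contra hall
            push_neg at hall
            apply h0
            have hz0 : (xstar - x k : Fin n → ℝ) = 0 := funext hall
            have : Φ.mulVec (xstar - x k) = 0 := by rw [hz0, Matrix.mulVec_zero]
            rw [hΦz] at this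
            apply Finset.sum_eq_zero
            intro i _
            have := congrFun this i
            simp only [Pi.sub_apply, Pi.zero_apply] at this
            rw [this]
            norm_num
          have hcm : (2*(Λopt.card:ℝ) - 1) * μ < 1 := by
            have hcle : (Λopt.card:ℝ) ≤ (m:ℝ) := by exact_mod_cast hcard
            nlinarith only [hμtot, hμ0, hcle]
          obtain ⟨J, hJ⟩ := recovery_step Φ hdiag μ hcohmem Λopt (xstar - x k)
            hzsupp hzne (idx k) hidxn hcm
          rw [hΦz] at hJ
          exact absurd (hsel k J) (not_le.mpr hJ)
        intro j hj
        rw [hupd k]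
        have h1 : x k j = 0 := hsupx j hj
        have h2 : s k j = 0 := by
          rw [hs k]
          simp [show j ≠ idx k from fun h => hj (h ▸ hidx)]
        simp [h1, h2]
  -- main estimate
  intro k
  by_cases htriv : (1 - B) / (4*(m:ℝ)) * (1 - 2*Y/β*κ')^2 ≤ 0
  · refine le_trans (F1 k) ?_
    nlinarith only [Fnn k, htriv]
  push_neg at htriv
  have hc4 : 0 < (1 - B) / (4*(m:ℝ)) := by
    by_contra hle
    push_neg at hle
    nlinarith only [sq_nonneg (1 - 2*Y/β*κ'), htriv, hle]
  have hm0 : 0 < (m:ℝ) := by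
    by_contra h
    push_neg at h
    have hm00 : (m:ℝ) = 0 := le_antisymm h (Nat.cast_nonneg m)
    rw [hm00] at hc4
    norm_num at hc4
  have hm1 : 1 ≤ (m:ℝ) := by
    have : 0 < m := by exact_mod_cast hm0
    exact_mod_cast this
  have hB1 : B < 1 := by
    rcases div_pos_iff.mp hc4 with ⟨h1, _⟩ | ⟨_, h2⟩
    · linarith
    · linarith
  by_cases hRk0 : ∑ i, (y i - Φ.mulVec (x k) i)^2 = 0
  · rw [hRk0, zero_mul]
    exact hRk0 ▸ F1 k
  -- main case
  have hsupx : ∀ j ∉ Λopt, x k j = 0 := (Inv k).resolve_left hRk0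
  obtain ⟨rk, hrkdef⟩ : ∃ a : Fin d → ℝ, a = y - Φ.mulVec (x k) := ⟨_, rfl⟩
  obtain ⟨R2k, hR2kdef⟩ : ∃ a : ℝ, a = ∑ i, (y i - Φ.mulVec (x k) i)^2 := ⟨_, rfl⟩
  rw [← hR2kdef] at hRk0 ⊢
  have hR2kpos : 0 < R2k := lt_of_le_of_ne (hR2kdef ▸ Fnn k) (Ne.symm hRk0)
  have hsumrk : ∑ i, rk i ^2 = R2k := by
    rw [hR2kdef]
    apply Finset.sum_congr rfl; intro i _
    rw [hrkdef]; simp [Pi.sub_apply]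
  obtain ⟨Rk, hRkdef⟩ : ∃ a : ℝ, a = Real.sqrt R2k := ⟨_, rfl⟩
  have hRk2 : Rk^2 = R2k := by rw [hRkdef]; exact Real.sq_sqrt hR2kpos.le
  have hRkpos : 0 < Rk := by rw [hRkdef]; exact Real.sqrt_pos.mpr hR2kpos
  have hRkY : Rk ≤ Y := by
    rw [hRkdef]
    calc Real.sqrt R2k ≤ Real.sqrt (Y^2) := Real.sqrt_le_sqrt (by rw [hR2kdef]; exact F2 k)
      _ = Y := Real.sqrt_sq hY0
  have hΦz : Φ.mulVec (xstar - x k) = rk := by rw [Matrix.mulVec_sub, ← hy, hrkdef]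
  have hzsupp : ∀ j ∉ Λopt, (xstar - x k) j = 0 := by
    intro j hj
    have h1 : xstar j = 0 := by by_contra hne; exact hj ((hsupp j).mp hne)
    simp [h1, hsupx j hj]
  obtain ⟨z, hzdef⟩ : ∃ a : Fin n → ℝ, a = xstar - x k := ⟨_, rfl⟩
  rw [← hzdef] at hΦz hzsupp
  obtain ⟨S2, hS2def⟩ : ∃ a : ℝ, a = ∑ j, z j ^2 := ⟨_, rfl⟩
  obtain ⟨L1, hL1def⟩ : ∃ a : ℝ, a = ∑ j, |z j| := ⟨_, rfl⟩
  have hS2nn : 0 ≤ S2 := by rw [hS2def]; positivity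
  have hL1nn : 0 ≤ L1 := by rw [hL1def]; positivity
  obtain ⟨A, hAdef⟩ : ∃ a : ℝ, a = 1 - ((m:ℝ)-1)*μ := ⟨_, rfl⟩
  have hA2 : 1/2 < A := by rw [hAdef]; nlinarith only [hμtot, hμ0]
  have hApos : 0 < A := by linarith
  have hAS2 : A * S2 ≤ R2k := by
    have hq := quadform_lb Φ hdiag μ hμ0 hcohmem Λopt z hzsupp
    rw [← hS2def] at hq
    have hqr : ∑ i, (Φ.mulVec z i)^2 = R2k := by rw [hΦz, hsumrk]
    rw [hqr] at hq
    have hcle : (Λopt.card:ℝ) ≤ (m:ℝ) := by exact_mod_cast hcard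
    have hAle : A ≤ 1 - ((Λopt.card:ℝ) - 1)*μ := by
      rw [hAdef]; nlinarith only [hμ0, hcle]
    nlinarith only [hS2nn, hq, hAle]
  have hL1sq : L1^2 ≤ (m:ℝ) * S2 := by
    have hres1 : L1 = ∑ j ∈ Λopt, |z j| := by
      rw [hL1def, ← Finset.sum_subset (Finset.subset_univ Λopt)
        (by intro j _ hj; simp [hzsupp j hj])]
    have hres2 : S2 = ∑ j ∈ Λopt, z j^2 := by
      rw [hS2def, ← Finset.sum_subset (Finset.subset_univ Λopt)
        (by intro j _ hj; simp [hzsupp j hj])]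
    rw [hres1, hres2]
    have h1 : (∑ j ∈ Λopt, |z j|)^2 ≤ (Λopt.card:ℝ) * ∑ j ∈ Λopt, z j^2 := by
      have := sq_sum_le_card_mul_sum_sq (s := Λopt) (f := fun j => |z j|)
      simpa [sq_abs] using this
    have hcle : (Λopt.card:ℝ) ≤ (m:ℝ) := by exact_mod_cast hcard
    have h2nn : (0:ℝ) ≤ ∑ j ∈ Λopt, z j^2 := by positivity
    nlinarith only [h1, hcle, h2nn]
  obtain ⟨K, hKdef⟩ : ∃ a : ℝ, a = (m:ℝ)/A := ⟨_, rfl⟩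
  have hKpos : 0 < K := by rw [hKdef]; exact div_pos hm0 hApos
  have hK2m : K ≤ 2*(m:ℝ) := by rw [hKdef, div_le_iff₀ hApos]; nlinarith only [hm0, hA2]
  obtain ⟨κ, hκdef⟩ : ∃ a : ℝ, a = Real.sqrt K := ⟨_, rfl⟩
  have hκ2 : κ^2 = K := by rw [hκdef]; exact Real.sq_sqrt hKpos.le
  have hκnn : 0 ≤ κ := by rw [hκdef]; exact Real.sqrt_nonneg _
  have hκ1 : 1 ≤ κ := by
    have hK1 : 1 ≤ K := by
      rw [hKdef, le_div_iff₀ hApos]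
      nlinarith only [hμ0, hm1, hAdef.ge, hAdef.le]
    nlinarith only [hκ2, hκnn, hK1]
  have hκ'2 : κ'^2 = (m:ℝ)/(1-B) := by
    rw [hκ'def]
    exact Real.sq_sqrt (div_nonneg hm0.le (by linarith))
  have hκ'nn : 0 ≤ κ' := by rw [hκ'def]; exact Real.sqrt_nonneg _
  have hmB : (m:ℝ) ≤ (m:ℝ)/(1-B) := by
    rw [le_div_iff₀ (by linarith : (0:ℝ) < 1 - B)]
    nlinarith only [hm0, hB0]
  have hκ'1 : 1 ≤ κ' := by nlinarith only [hκ'2, hκ'nn, hmB, hm1]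
  have hκκ' : κ^2 ≤ 2*κ'^2 := by rw [hκ2, hκ'2]; linarith only [hK2m, hmB]
  have hκ2κ' : κ ≤ 2*κ' := by nlinarith only [hκκ', hκnn, hκ'nn]
  have hselk : ∀ j, |(fun i => Φ i j) ⬝ᵥ rk| ≤ |(fun i => Φ i (idx k)) ⬝ᵥ rk| := by
    intro j; rw [hrkdef]; exact hsel k j
  obtain ⟨t, htdef⟩ : ∃ a : ℝ, a = (fun i => Φ i (idx k)) ⬝ᵥ rk := ⟨_, rfl⟩
  obtain ⟨M, hMdef⟩ : ∃ a : ℝ, a = |t| := ⟨_, rfl⟩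
  rw [← htdef, ← hMdef] at hselk
  have hM0 : 0 ≤ M := by rw [hMdef]; exact abs_nonneg t
  have hR2L1M : R2k ≤ L1 * M := by
    have hd : R2k = (Φ.mulVec z) ⬝ᵥ rk := by
      rw [hΦz, dotProduct, ← hsumrk]
      apply Finset.sum_congr rfl; intros; ring
    rw [hd, dot_mulVec' Φ z rk, hL1def, Finset.sum_mul]
    apply Finset.sum_le_sum
    intro j _
    calc z j * ((fun i => Φ i j) ⬝ᵥ rk) ≤ |z j * ((fun i => Φ i j) ⬝ᵥ rk)| := le_abs_self _
      _ = |z j| * |(fun i => Φ i j) ⬝ᵥ rk| := abs_mul _ _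
      _ ≤ |z j| * M := mul_le_mul_of_nonneg_left (hselk j) (abs_nonneg _)
  have hL1Rk : L1 ≤ κ * Rk := by
    have h1 : L1^2 ≤ (κ*Rk)^2 := by
      rw [mul_pow, hκ2, hRk2, hKdef, div_mul_eq_mul_div, le_div_iff₀ hApos]
      nlinarith only [hL1sq, hAS2, hm0, hApos, hS2nn]
    calc L1 = Real.sqrt (L1^2) := (Real.sqrt_sq hL1nn).symm
      _ ≤ Real.sqrt ((κ*Rk)^2) := Real.sqrt_le_sqrt h1
      _ = κ*Rk := Real.sqrt_sq (by positivity)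
  have hRkκM : Rk ≤ κ * M := by
    have h1 : Rk * Rk ≤ (κ*M) * Rk := by nlinarith only [hR2L1M, hL1Rk, hM0, hRk2]
    exact le_of_mul_le_mul_right h1 hRkpos
  obtain ⟨g, hgdef⟩ : ∃ a : ℝ, a = (Φ.mulVec (s k - x k)) ⬝ᵥ rk := ⟨_, rfl⟩
  have hyx : Φ.mulVec (x k) = y - rk := by rw [hrkdef, sub_sub_cancel]
  have hsk : s k = fun j => if j = idx k then Real.sign t * β else 0 := by
    rw [hs k, htdef, hrkdef]
  have hΦsdot : Φ.mulVec (s k) ⬝ᵥ rk = β * M := by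
    rw [dot_mulVec' Φ (s k) rk, hsk]
    simp only [ite_mul, zero_mul, Finset.sum_ite_eq', Finset.mem_univ, if_true]
    rw [← htdef, hMdef]
    rcases lt_trichotomy t 0 with h | h | h
    · rw [Real.sign_of_neg h, abs_of_neg h]; ring
    · rw [h]; simp
    · rw [Real.sign_of_pos h, abs_of_pos h]; ring
  have hxdot : Φ.mulVec (x k) ⬝ᵥ rk = (y ⬝ᵥ rk) - R2k := by
    rw [hyx, sub_dotProduct]
    congr 1
    rw [dotProduct, ← hsumrk]
    apply Finset.sum_congr rfl; intros; ring
  have hgeq : g = β*M + R2k - y ⬝ᵥ rk := by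
    rw [hgdef, Matrix.mulVec_sub, sub_dotProduct, hΦsdot, hxdot]; ring
  have hyrk : y ⬝ᵥ rk ≤ Y * Rk := by
    refine le_trans (le_abs_self _) (le_trans (abs_dot_le y rk) ?_)
    rw [hsumrk, hYdef, l2norm, hRkdef]
  have hg0 : Rk * (β - κ*Y) ≤ κ * g := by
    rw [hgeq]
    nlinarith only [mul_le_mul_of_nonneg_left hRkκM hβ.le,
      mul_le_mul_of_nonneg_left hyrk hκnn, mul_nonneg hκnn hR2kpos.le]
  have hβκY : 0 < β - κ*Y := by
    nlinarith only [mul_le_mul_of_nonneg_right hκ2κ' hY0, hβbig]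
  have hgpos : 0 < g := by nlinarith only [hg0, mul_pos hRkpos hβκY, hκnn]
  obtain ⟨h2, hh2def⟩ : ∃ a : ℝ, a = ∑ i, (Φ.mulVec (s k - x k) i)^2 := ⟨_, rfl⟩
  have hsgn2 : (Real.sign t)^2 ≤ 1 := by
    rcases lt_trichotomy t 0 with h | h | h
    · rw [Real.sign_of_neg h]; norm_num
    · rw [h, Real.sign_zero]; norm_num
    · rw [Real.sign_of_pos h]; norm_num
  have hs2 : ∑ i, (Φ.mulVec (s k) i)^2 ≤ β^2 := by
    have hsi : ∀ i, Φ.mulVec (s k) i = Φ i (idx k) * (Real.sign t * β) := by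
      intro i
      rw [hsk, Matrix.mulVec, dotProduct]
      simp only [mul_ite, mul_zero, Finset.sum_ite_eq', Finset.mem_univ, if_true]
    calc ∑ i, (Φ.mulVec (s k) i)^2 = (Real.sign t * β)^2 * ∑ i, (Φ i (idx k))^2 := by
          rw [Finset.mul_sum]
          apply Finset.sum_congr rfl; intro i _
          rw [hsi i]; ring
      _ = (Real.sign t)^2 * β^2 := by rw [hdsum]; ring
      _ ≤ β^2 := by nlinarith only [sq_nonneg β, hsgn2]
  have hx2 : ∑ i, (Φ.mulVec (x k) i)^2 ≤ 4*Y^2 := by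
    have h1 : ∀ i, Φ.mulVec (x k) i = y i - 1 * rk i := by
      intro i; rw [hyx]; simp
    have he : ∑ i, (Φ.mulVec (x k) i)^2 = Y^2 - 2*(rk ⬝ᵥ y) + R2k := by
      simp only [h1]
      rw [sum_sub_smul_sq y rk 1, hY2, hsumrk]
      ring
    have h2 : |rk ⬝ᵥ y| ≤ Rk * Y := by
      refine le_trans (abs_dot_le rk y) ?_
      rw [hsumrk, hYdef, l2norm, hRkdef]
    rw [he]
    nlinarith only [hRkY, hRkpos, hY0, hRk2, neg_abs_le (rk ⬝ᵥ y), h2]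
  have hcross : |Φ.mulVec (x k) ⬝ᵥ Φ.mulVec (s k)| ≤ 2*Y*β := by
    refine le_trans (abs_dot_le _ _) ?_
    have h1 : Real.sqrt (∑ i, (Φ.mulVec (x k) i)^2) ≤ 2*Y := by
      calc Real.sqrt (∑ i, (Φ.mulVec (x k) i)^2) ≤ Real.sqrt (4*Y^2) :=
            Real.sqrt_le_sqrt hx2
        _ = 2*Y := by
            rw [show (4:ℝ)*Y^2 = (2*Y)^2 by ring]
            exact Real.sqrt_sq (by positivity)
    have h2 : Real.sqrt (∑ i, (Φ.mulVec (s k) i)^2) ≤ β := by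
      calc Real.sqrt (∑ i, (Φ.mulVec (s k) i)^2) ≤ Real.sqrt (β^2) := Real.sqrt_le_sqrt hs2
        _ = β := Real.sqrt_sq hβ.le
    exact mul_le_mul h1 h2 (Real.sqrt_nonneg _) (by positivity)
  have hh2ub : h2 ≤ (β + 2*Y)^2 := by
    have h1 : ∀ i, Φ.mulVec (s k - x k) i = Φ.mulVec (s k) i - 1 * Φ.mulVec (x k) i := by
      intro i; rw [Matrix.mulVec_sub]; simp
    have hexp : h2 = (∑ i, (Φ.mulVec (s k) i)^2) - 2*(Φ.mulVec (x k) ⬝ᵥ Φ.mulVec (s k))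
        + ∑ i, (Φ.mulVec (x k) i)^2 := by
      rw [hh2def]
      simp only [h1]
      rw [sum_sub_smul_sq (Φ.mulVec (s k)) (Φ.mulVec (x k)) 1]
      ring
    rw [hexp]
    have hcross2 : -(Φ.mulVec (x k) ⬝ᵥ Φ.mulVec (s k)) ≤ 2*Y*β :=
      le_trans (neg_le_abs _) hcross
    linarith only [hs2, hx2, hcross2]
  obtain ⟨h', hh'def⟩ : ∃ a : ℝ, a = (β+2*Y)^2 := ⟨_, rfl⟩
  have hh'pos : 0 < h' := by rw [hh'def]; positivity
  have hgup : g ≤ (β+2*Y) * Rk := by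
    rw [hgdef]
    refine le_trans (le_abs_self _) (le_trans (abs_dot_le _ _) ?_)
    rw [hsumrk, ← hRkdef]
    have hsq : Real.sqrt (∑ i, (Φ.mulVec (s k - x k) i)^2) ≤ β + 2*Y := by
      have hh2ub' : ∑ i, (Φ.mulVec (s k - x k) i)^2 ≤ (β+2*Y)^2 := by
        rw [← hh2def]; exact hh2ub
      calc Real.sqrt (∑ i, (Φ.mulVec (s k - x k) i)^2) ≤ Real.sqrt ((β+2*Y)^2) :=
            Real.sqrt_le_sqrt hh2ub'
        _ = β + 2*Y := Real.sqrt_sq (by positivity)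
    exact mul_le_mul_of_nonneg_right hsq hRkpos.le
  have hgle : g ≤ h' := by
    rw [hh'def]
    refine le_trans hgup ?_
    nlinarith only [hRkY, hY0, hβ, hRkpos]
  obtain ⟨gam, hgamdef⟩ : ∃ a : ℝ, a = g / h' := ⟨_, rfl⟩
  have hgammem : gam ∈ Set.Icc (0:ℝ) 1 :=
    ⟨by rw [hgamdef]; exact div_nonneg hgpos.le hh'pos.le,
     by rw [hgamdef, div_le_one hh'pos]; exact hgle⟩
  have hstep : ∑ i, (y i - Φ.mulVec (x (k+1)) i)^2 ≤ R2k - 2*gam*g + gam^2*h2 := by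
    rw [hupd k]
    refine le_trans (hγmin k gam hgammem) ?_
    have h1 : ∀ i, y i - Φ.mulVec (x k + gam • (s k - x k)) i
        = rk i - gam * (Φ.mulVec (s k - x k) i) := by
      intro i
      rw [Matrix.mulVec_add, Matrix.mulVec_smul, hrkdef]
      simp [Pi.add_apply, Pi.smul_apply, smul_eq_mul, Pi.sub_apply]
      ring
    simp only [h1]
    rw [sum_sub_smul_sq rk (Φ.mulVec (s k - x k)) gam, hsumrk, ← hgdef, ← hh2def]
  have hstep2 : ∑ i, (y i - Φ.mulVec (x (k+1)) i)^2 ≤ R2k - g^2/h' := by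
    refine le_trans hstep ?_
    have ha : gam^2*h2 ≤ gam^2*h' := mul_le_mul_of_nonneg_left (by rw [hh'def]; exact hh2ub) (sq_nonneg _)
    have hb : R2k - 2*gam*g + gam^2*h' = R2k - g^2/h' := by
      rw [hgamdef]; field_simp; ring
    linarith only [ha, hb]
  have hlt2κ : 0 < 2*κ' - κ := by nlinarith only [hκκ', hκ'1, hκnn]
  have h8 : 4*κ*κ' + κ ≤ 8*κ'^2 := by nlinarith only [sq_nonneg (2*κ'-κ), hκκ', hκ1, hκ'1]
  have key2 : κ*((β+2*Y)*(β-2*Y*κ')) ≤ 2*κ'*β*(β-κ*Y) := by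
    have h4 : (0:ℝ) ≤ 16*κ*κ'*(2*κ'-κ) - 4*κ^2 := by nlinarith only [h8, hκnn, hκ1]
    have hT : 0 ≤ (2*κ'-κ)*β^2 - 2*κ*Y*β + 4*κ*κ'*Y^2 := by
      nlinarith only [sq_nonneg (2*(2*κ'-κ)*β - 2*κ*Y), mul_nonneg h4 (sq_nonneg Y), hlt2κ]
    nlinarith only [hT]
  have hq : Rk*((β+2*Y)*(β-2*Y*κ')) ≤ 2*κ'*β*g := by
    have hκpos : 0 < κ := by linarith
    have hq1 : Rk*(κ*((β+2*Y)*(β-2*Y*κ'))) ≤ Rk*(2*κ'*β*(β-κ*Y)) :=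
      mul_le_mul_of_nonneg_left key2 hRkpos.le
    have hq2 : (2*κ'*β)*(Rk*(β-κ*Y)) ≤ (2*κ'*β)*(κ*g) := by
      apply mul_le_mul_of_nonneg_left hg0
      positivity
    apply le_of_mul_le_mul_left _ hκpos
    calc κ*(Rk*((β+2*Y)*(β-2*Y*κ'))) = Rk*(κ*((β+2*Y)*(β-2*Y*κ'))) := by ring
      _ ≤ Rk*(2*κ'*β*(β-κ*Y)) := hq1
      _ = (2*κ'*β)*(Rk*(β-κ*Y)) := by ring
      _ ≤ (2*κ'*β)*(κ*g) := hq2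
      _ = κ*(2*κ'*β*g) := by ring
  have hβ2Yκ' : 0 < β - 2*Y*κ' := by linarith [hβbig]
  have hqnn : 0 ≤ Rk*((β+2*Y)*(β-2*Y*κ')) :=
    mul_nonneg hRkpos.le (mul_nonneg (by positivity) hβ2Yκ'.le)
  have hqsq : (Rk*((β+2*Y)*(β-2*Y*κ')))^2 ≤ (2*κ'*β*g)^2 := pow_le_pow_left₀ hqnn hq 2
  have hκ'pos : 0 < κ' := by linarith
  have hBm : (1-B)/(4*(m:ℝ)) = 1/(4*κ'^2) := by
    rw [hκ'2]
    have h1B : (1:ℝ) - B ≠ 0 := by linarith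
    field_simp
  have hfin : R2k * ((1-B)/(4*(m:ℝ)) * (1 - 2*Y/β*κ')^2) ≤ g^2/h' := by
    rw [hBm, le_div_iff₀ hh'pos]
    have h2κβpos : (0:ℝ) < (2*κ'*β)^2 := by positivity
    refine le_of_mul_le_mul_right ?_ h2κβpos
    have hgoal : R2k * (1/(4*κ'^2) * (1 - 2*Y/β*κ')^2) * h' * ((2*κ'*β)^2)
        = (Rk*((β+2*Y)*(β-2*Y*κ')))^2 := by
      rw [← hRk2, hh'def]
      field_simp
      ring
    rw [hgoal]
    calc (Rk*((β+2*Y)*(β-2*Y*κ')))^2 ≤ (2*κ'*β*g)^2 := hqsq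
      _ = g^2*(2*κ'*β)^2 := by ring
  have hexpand : R2k * (1 - (1-B)/(4*(m:ℝ)) * (1 - 2*Y/β*κ')^2)
      = R2k - R2k * ((1-B)/(4*(m:ℝ)) * (1 - 2*Y/β*κ')^2) := by ring
  linarith only [hstep2, hfin, hexpand]
end
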